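/- arXiv:1510.02184 — 10 statements merged into one kernel-verified Lean document; each statement's English description precedes it below -/
import Mathlib

section
/- Bounding the weighted entropy of a finitely valued random variable via the uniform distribution: Let X be a random variable taking at most m values 1,…,m with probabilities p_i = P(X = i), let φ : {1,…,m} → [0,∞) be a weight function, and let 0 < β ≤ 1. If ∑_{i=1}^m φ(i)·(p_i − β) ≥ 0, then the weighted entropy h^w_φ(X) = −∑_{i=1}^m φ(i)·p_i·log p_i satisfies h^w_φ(X) ≤ −log β · ∑_{i=1}^m φ(i)·p_i, with equality if and only if φ(i)·(p_i − β) = 0 for all i = 1,…,m. -/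
open Real

lemma weighted_term_aux (w q b : ℝ) (hw : 0 ≤ w) (hq : 0 ≤ q) (hb : 0 < b) :
    w * q * (Real.log b - Real.log q) ≤ w * (b - q) ∧
      (w * q * (Real.log b - Real.log q) = w * (b - q) ↔ w * (q - b) = 0) := by
  rcases eq_or_lt_of_le hw with hw0 | hwpos
  · constructor
    · simp [← hw0]
    · simp [← hw0]
  rcases eq_or_lt_of_le hq with hq0 | hqpos
  · constructor
    · simp only [← hq0]
      have : w * 0 * (Real.log b - Real.log 0) = 0 := by ring
      rw [this, sub_zero]
      positivity
    · constructor
      · intro h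
        exfalso
        simp only [← hq0] at h
        have : w * b = 0 := by nlinarith
        have := mul_pos hwpos hb
        linarith
      · intro h
        exfalso
        simp only [← hq0] at h
        have : w * b = 0 := by nlinarith
        have := mul_pos hwpos hb
        linarith
  have hlog : Real.log b - Real.log q = Real.log (b / q) := by
    rw [Real.log_div hb.ne' hqpos.ne']
  have hbq : 0 < b / q := div_pos hb hqpos
  have hle : Real.log (b / q) ≤ b / q - 1 := Real.log_le_sub_one_of_pos hbq
  have hid : q * (b / q - 1) = b - q := by field_simp
  constructor
  · calc w * q * (Real.log b - Real.log q) = w * (q * Real.log (b / q)) := by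
          rw [hlog]; ring
      _ ≤ w * (q * (b / q - 1)) := by
          apply mul_le_mul_of_nonneg_left _ hw
          exact mul_le_mul_of_nonneg_left hle hq
      _ = w * (b - q) := by rw [hid]
  · constructor
    · intro h
      by_contra hne
      have hqb : q ≠ b := by
        intro hqb
        apply hne
        rw [hqb]; ring
      have hbq1 : b / q ≠ 1 := by
        intro h1
        apply hqb
        field_simp at h1
        linarith
      have hlt : Real.log (b / q) < b / q - 1 := Real.log_lt_sub_one_of_pos hbq hbq1
      have : w * q * (Real.log b - Real.log q) < w * (b - q) := by
        rw [hlog, ← hid]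
        have := mul_pos hwpos hqpos
        nlinarith
      linarith
    · intro h
      have hqb : q = b := by
        rcases mul_eq_zero.mp h with h1 | h2
        · exact absurd h1 hwpos.ne'
        · linarith [sub_eq_zero.mp h2]
      subst hqb
      ring

/-- **Bounding the weighted entropy via a uniform distribution (finite case).**
For a random variable taking at most `m` values with probabilities `p i`, a weight
function `φ` and `0 < β ≤ 1` with `∑ φ i (p i - β) ≥ 0`, the weighted entropy
`-∑ φ i p i log (p i)` is at most `-log β * ∑ φ i p i`, with equality iff
`φ i * (p i - β) = 0` for all `i`. -/
theorem weighted_entropy_le_uniform_finite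
    (m : ℕ) (p φ : Fin m → ℝ) (β : ℝ)
    (hp0 : ∀ i, 0 ≤ p i) (hpsum : ∑ i, p i = 1)
    (hφ0 : ∀ i, 0 ≤ φ i)
    (hβ0 : 0 < β) (hβ1 : β ≤ 1)
    (hcond : 0 ≤ ∑ i, φ i * (p i - β)) :
    (-∑ i, φ i * p i * log (p i)) ≤ -log β * ∑ i, φ i * p i ∧
      ((-∑ i, φ i * p i * log (p i)) = -log β * ∑ i, φ i * p i ↔
        ∀ i, φ i * (p i - β) = 0) := by
  classical
  set f : Fin m → ℝ := fun i => φ i * p i * (Real.log β - Real.log (p i)) with hf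
  set g : Fin m → ℝ := fun i => φ i * (β - p i) with hg
  have key : ∀ i, f i ≤ g i ∧ (f i = g i ↔ φ i * (p i - β) = 0) :=
    fun i => weighted_term_aux (φ i) (p i) β (hφ0 i) (hp0 i) hβ0
  have hsumg : ∑ i, g i ≤ 0 := by
    have : ∑ i, g i = -∑ i, φ i * (p i - β) := by
      rw [← Finset.sum_neg_distrib]
      exact Finset.sum_congr rfl fun i _ => by simp [hg]; ring
    linarith
  have hsumfg : ∑ i, f i ≤ ∑ i, g i :=
    Finset.sum_le_sum fun i _ => (key i).1
  have hD : ∑ i, f i = (-∑ i, φ i * p i * log (p i)) - (-Real.log β * ∑ i, φ i * p i) := by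
    rw [neg_mul, sub_neg_eq_add, Finset.mul_sum, ← Finset.sum_neg_distrib,
      ← Finset.sum_add_distrib]
    exact Finset.sum_congr rfl fun i _ => by simp only [hf]; ring
  have hle : (-∑ i, φ i * p i * log (p i)) ≤ -log β * ∑ i, φ i * p i := by
    have := hsumfg.trans hsumg
    linarith [hD ▸ this]
  refine ⟨hle, ?_, ?_⟩
  · intro heq
    by_contra hne
    push_neg at hne
    obtain ⟨i0, hi0⟩ := hne
    have hstrict : f i0 < g i0 := lt_of_le_of_ne (key i0).1 (fun h => hi0 ((key i0).2.mp h))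
    have : ∑ i, f i < ∑ i, g i :=
      Finset.sum_lt_sum (fun i _ => (key i).1) ⟨i0, Finset.mem_univ i0, hstrict⟩
    have hD0 : ∑ i, f i = 0 := by rw [hD, heq]; ring
    linarith
  · intro hall
    have : ∀ i, f i = g i := fun i => (key i).2.mpr (hall i)
    have hfg : ∑ i, f i = ∑ i, g i := Finset.sum_congr rfl fun i _ => this i
    have hg0 : ∑ i, g i = 0 := by
      have h1 : ∑ i, g i = -∑ i, φ i * (p i - β) := by
        rw [← Finset.sum_neg_distrib]
        exact Finset.sum_congr rfl fun i _ => by simp [hg]; ring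
      have h2 : ∑ i, φ i * (p i - β) = 0 := Finset.sum_eq_zero fun i _ => hall i
      rw [h1, h2]; ring
    have : ∑ i, f i = 0 := by rw [hfg, hg0]
    linarith [hD ▸ this]
end

section
/- Bounding the weighted entropy via a uniform density, general case: Let (X, ν) be a measure space, φ : X → [0,∞) a measurable weight function, f : X → [0,∞) a measurable probability density with respect to ν, and β > 0 a constant. Assume ∫_X φ(x)·f(x)·(1 ∨ |log f(x)|) dν(x) < ∞. If ∫_X φ(x)·(f(x) − β) dν(x) ≥ 0, then h^w_φ(f) = −∫_X φ(x)·f(x)·log f(x) dν(x) ≤ −log β · ∫_X φ(x)·f(x) dν(x), with equality if and only if φ(x)·(f(x) − β) = 0 for f-almost all x ∈ X. -/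
open MeasureTheory Real

/-- **Bounding the weighted entropy via a uniform density (general case).**
If `f` is a probability density w.r.t. `ν`, `β > 0`, and `∫ φ (f - β) dν ≥ 0`, then
the weighted entropy `h^w_φ(f) = -∫ φ f log f dν` satisfies
`h^w_φ(f) ≤ -log β * ∫ φ f dν`, with equality iff `φ (f - β) = 0` `f`-a.e. -/
theorem weighted_entropy_le_uniform
    {X : Type*} [MeasurableSpace X] (ν : Measure X)
    (φ f : X → ℝ) (β : ℝ)
    (hφm : Measurable φ) (hfm : Measurable f)
    (hφ0 : ∀ x, 0 ≤ φ x) (hf0 : ∀ x, 0 ≤ f x)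
    (hfprob : ∫ x, f x ∂ν = 1)
    (hβ : 0 < β)
    (hint1 : Integrable (fun x => φ x * f x * max 1 |log (f x)|) ν)
    (hint2 : Integrable (fun x => φ x * (f x - β)) ν)
    (hcond : 0 ≤ ∫ x, φ x * (f x - β) ∂ν) :
    (-∫ x, φ x * f x * log (f x) ∂ν) ≤ -log β * ∫ x, φ x * f x ∂ν ∧
      ((-∫ x, φ x * f x * log (f x) ∂ν) = -log β * ∫ x, φ x * f x ∂ν ↔
        ∀ᵐ x ∂ν, 0 < f x → φ x * (f x - β) = 0) := by
  set h : X → ℝ := fun x => φ x * f x * (log (f x) - log β) with hh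
  set g : X → ℝ := fun x => h x - φ x * (f x - β) with hg
  -- pointwise key inequality
  have hkey : ∀ x, 0 < f x → f x - β ≤ f x * (log (f x) - log β) := by
    intro x hfx
    have h1 : log (β / f x) ≤ β / f x - 1 := Real.log_le_sub_one_of_pos (by positivity)
    have h2 : log (β / f x) = log β - log (f x) := Real.log_div (ne_of_gt hβ) (ne_of_gt hfx)
    rw [h2] at h1
    have h3 := mul_le_mul_of_nonneg_left h1 hfx.le
    have h4 : f x * (β / f x - 1) = β - f x := by field_simp
    nlinarith
  have hg0 : ∀ x, 0 ≤ g x := by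
    intro x
    rcases (hf0 x).eq_or_lt with h0 | h0
    · have : g x = φ x * β := by simp [hg, hh, ← h0]
      rw [this]; exact mul_nonneg (hφ0 x) hβ.le
    · have := mul_le_mul_of_nonneg_left (hkey x h0) (hφ0 x)
      simp only [hg, hh]
      nlinarith
  -- strict version for the equality case
  have hgstrict : ∀ x, 0 < f x → g x = 0 → φ x * (f x - β) = 0 := by
    intro x hfx hgx
    by_contra hne
    have hφx : 0 < φ x := by
      rcases (hφ0 x).eq_or_lt with e | e
      · exact absurd (by rw [← e]; ring) hne
      · exact e
    have hfβ : f x ≠ β := by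
      intro e; exact hne (by rw [e]; ring)
    have h1 : log (β / f x) < β / f x - 1 := by
      refine Real.log_lt_sub_one_of_pos (by positivity) ?_
      intro e
      apply hfβ
      field_simp at e
      linarith
    have h2 : log (β / f x) = log β - log (f x) := Real.log_div (ne_of_gt hβ) (ne_of_gt hfx)
    rw [h2] at h1
    have h3 := mul_lt_mul_of_pos_left h1 hfx
    have h4 : f x * (β / f x - 1) = β - f x := by field_simp
    have hstrict : f x - β < f x * (log (f x) - log β) := by nlinarith
    have := mul_lt_mul_of_pos_left hstrict hφx
    simp only [hg, hh] at hgx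
    nlinarith
  -- integrability facts
  have haeφf : AEStronglyMeasurable (fun x => φ x * f x) ν :=
    (hφm.mul hfm).aestronglyMeasurable
  have hφf : Integrable (fun x => φ x * f x) ν := by
    refine hint1.mono haeφf (Filter.Eventually.of_forall fun x => ?_)
    have h0 : 0 ≤ φ x * f x := mul_nonneg (hφ0 x) (hf0 x)
    rw [Real.norm_eq_abs, Real.norm_eq_abs, abs_of_nonneg h0,
      abs_of_nonneg (by positivity : 0 ≤ φ x * f x * max 1 |log (f x)|)]
    nlinarith [le_max_left 1 |log (f x)|, abs_nonneg (log (f x))]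
  have hφflog : Integrable (fun x => φ x * f x * log (f x)) ν := by
    refine hint1.mono ((hφm.mul hfm).mul hfm.log).aestronglyMeasurable
      (Filter.Eventually.of_forall fun x => ?_)
    have h0 : 0 ≤ φ x * f x := mul_nonneg (hφ0 x) (hf0 x)
    rw [Real.norm_eq_abs, Real.norm_eq_abs, abs_mul, abs_of_nonneg h0,
      abs_of_nonneg (by positivity : 0 ≤ φ x * f x * max 1 |log (f x)|)]
    nlinarith [le_max_right 1 |log (f x)|, abs_nonneg (log (f x)), (le_max_left 1 |log (f x)|)]
  have hInth : Integrable h ν := by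
    have := hφflog.sub (hφf.mul_const (log β))
    refine this.congr (Filter.Eventually.of_forall fun x => ?_)
    simp only [Pi.sub_apply, hh]; ring
  have hIntg : Integrable g ν := hInth.sub hint2
  have hintegral_h : ∫ x, h x ∂ν
      = (∫ x, φ x * f x * log (f x) ∂ν) - log β * ∫ x, φ x * f x ∂ν := by
    have e : ∫ x, h x ∂ν
        = ∫ x, (φ x * f x * log (f x) - log β * (φ x * f x)) ∂ν := by
      congr 1; funext x; simp only [hh]; ring
    rw [e, integral_sub hφflog (hφf.const_mul _), MeasureTheory.integral_const_mul]
  have hintegral_g : ∫ x, g x ∂ν = (∫ x, h x ∂ν) - ∫ x, φ x * (f x - β) ∂ν := by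
    simp only [hg]
    exact integral_sub hInth hint2
  have hIg : 0 ≤ ∫ x, g x ∂ν := integral_nonneg hg0
  have hineq : (-∫ x, φ x * f x * log (f x) ∂ν) ≤ -log β * ∫ x, φ x * f x ∂ν := by
    have : log β * ∫ x, φ x * f x ∂ν ≤ ∫ x, φ x * f x * log (f x) ∂ν := by
      rw [hintegral_h] at hintegral_g
      linarith
    linarith
  refine ⟨hineq, ?_, ?_⟩
  · -- equality ⇒ condition
    intro heq
    have hh0 : ∫ x, h x ∂ν = 0 := by
      rw [hintegral_h]; linarith
    have hg_eq0 : ∫ x, g x ∂ν = 0 := by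
      rw [hintegral_g, hh0]; linarith
    have hgae : g =ᵐ[ν] 0 :=
      (integral_eq_zero_iff_of_nonneg hg0 hIntg).mp hg_eq0
    filter_upwards [hgae] with x hx hfx
    exact hgstrict x hfx hx
  · -- condition ⇒ equality
    intro hC
    have hhae : h =ᵐ[ν] 0 := by
      filter_upwards [hC] with x hx
      rcases (hf0 x).eq_or_lt with h0 | h0
      · simp [hh, ← h0]
      · rcases mul_eq_zero.mp (hx h0) with e | e
        · simp [hh, e]
        · have : f x = β := by linarith [sub_eq_zero.mp e]
          simp [hh, this]
    have : ∫ x, h x ∂ν = 0 := by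
      rw [integral_congr_ae hhae]; simp
    rw [hintegral_h] at this
    linarith
end

section
/- Nonnegativity of conditional weighted entropy: Let f(x₁,x₂) be a joint probability density on X₁ × X₂ with respect to a product measure ν₁ ⊗ ν₂, with marginal f₂(x₂) = ∫_{X₁} f(x₁,x₂) dν₁(x₁) and conditional density f_{1|2}(x₁|x₂) = f(x₁,x₂)/f₂(x₂), and let φ : X₁ × X₂ → [0,∞) be a measurable weight function such that all integrals involved converge absolutely. If ∫_{X₁×X₂} φ(x₁,x₂)·f(x₁,x₂)·(f_{1|2}(x₁|x₂) − 1) dν₁dν₂ ≤ 0, then the conditional weighted entropy h^w_φ(X₁|X₂) = −∫_{X₁×X₂} φ(x₁,x₂)·f(x₁,x₂)·log f_{1|2}(x₁|x₂) dν₁dν₂ ≥ 0, with equality if and only if φ(x₁,x₂)·(f_{1|2}(x₁|x₂) − 1) = 0 for f-almost all (x₁,x₂). -/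
open MeasureTheory Real

/-- **Nonnegativity of conditional weighted entropy.** For a joint probability density
`f` on `X₁ × X₂` with marginal `f₂` and conditional density `f/f₂`, if
`∫ φ f (f/f₂ - 1) ≤ 0` then the conditional weighted entropy
`h^w_φ(X₁|X₂) = -∫ φ f log (f/f₂)` is nonnegative, with equality iff
`φ (f/f₂ - 1) = 0` for `f`-almost all points. -/
theorem conditional_weighted_entropy_nonneg
    {X₁ X₂ : Type*} [MeasurableSpace X₁] [MeasurableSpace X₂]
    (ν₁ : Measure X₁) (ν₂ : Measure X₂) [SigmaFinite ν₁] [SigmaFinite ν₂]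
    (f φ : X₁ × X₂ → ℝ)
    (hfm : Measurable f) (hφm : Measurable φ)
    (hf0 : ∀ p, 0 ≤ f p) (hφ0 : ∀ p, 0 ≤ φ p)
    (hfprob : ∫ p, f p ∂(ν₁.prod ν₂) = 1)
    (f₂ : X₂ → ℝ) (hf₂ : ∀ x₂, f₂ x₂ = ∫ x₁, f (x₁, x₂) ∂ν₁)
    (hint1 : Integrable (fun p => φ p * f p * log (f p / f₂ p.2)) (ν₁.prod ν₂))
    (hint2 : Integrable (fun p => φ p * f p * (f p / f₂ p.2 - 1)) (ν₁.prod ν₂))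
    (hcond : ∫ p, φ p * f p * (f p / f₂ p.2 - 1) ∂(ν₁.prod ν₂) ≤ 0) :
    0 ≤ -∫ p, φ p * f p * log (f p / f₂ p.2) ∂(ν₁.prod ν₂) ∧
      ((-∫ p, φ p * f p * log (f p / f₂ p.2) ∂(ν₁.prod ν₂)) = 0 ↔
        ∀ᵐ p ∂(ν₁.prod ν₂), 0 < f p → φ p * (f p / f₂ p.2 - 1) = 0) := by
  -- f is integrable
  have hfint : Integrable f (ν₁.prod ν₂) := by
    by_contra h
    rw [integral_undef h] at hfprob
    exact zero_ne_one hfprob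
  -- f₂ is nonnegative
  have hf₂0 : ∀ x₂, 0 ≤ f₂ x₂ := fun x₂ => by
    rw [hf₂ x₂]; exact integral_nonneg fun x₁ => hf0 _
  -- f₂ measurability
  have hf₂m : Measurable f₂ := by
    have hfe : f₂ = fun x₂ => ∫ x₁, f (x₁, x₂) ∂ν₁ := funext hf₂
    rw [hfe]
    exact (hfm.stronglyMeasurable.integral_prod_left').measurable
  -- key a.e. fact: where f > 0, f₂ > 0 (a.e.)
  have hmeasset : MeasurableSet {p : X₁ × X₂ | f₂ p.2 = 0 → f p = 0} := by
    have h1 : MeasurableSet {p : X₁ × X₂ | f₂ p.2 = 0} :=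
      (hf₂m.comp measurable_snd) (measurableSet_singleton 0)
    have h2 : MeasurableSet {p : X₁ × X₂ | f p = 0} := hfm (measurableSet_singleton 0)
    have : {p : X₁ × X₂ | f₂ p.2 = 0 → f p = 0} =
        {p : X₁ × X₂ | f₂ p.2 = 0}ᶜ ∪ {p : X₁ × X₂ | f p = 0} := by
      ext p; simp [imp_iff_not_or]
    rw [this]; exact h1.compl.union h2
  have H : ∀ᵐ p ∂(ν₁.prod ν₂), f₂ p.2 = 0 → f p = 0 := by
    rw [Measure.ae_prod_iff_ae_ae hmeasset, Measure.ae_ae_comm hmeasset]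
    filter_upwards [hfint.prod_left_ae] with x₂ hx₂
    by_cases hzero : f₂ x₂ = 0
    · have h0 : ∫ x₁, f (x₁, x₂) ∂ν₁ = 0 := by rw [← hf₂ x₂]; exact hzero
      have := (integral_eq_zero_iff_of_nonneg (fun x₁ => hf0 _) hx₂).mp h0
      filter_upwards [this] with x₁ hx₁ _
      exact hx₁
    · filter_upwards with x₁ h
      exact absurd h hzero
  have Hpos : ∀ᵐ p ∂(ν₁.prod ν₂), 0 < f p → 0 < f₂ p.2 := by
    filter_upwards [H] with p hp hfp
    rcases lt_or_eq_of_le (hf₂0 p.2) with h | h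
    · exact h
    · exact absurd (hp h.symm) (ne_of_gt hfp)
  -- pointwise a.e. inequality
  have hae_le : ∀ᵐ p ∂(ν₁.prod ν₂),
      φ p * f p * log (f p / f₂ p.2) ≤ φ p * f p * (f p / f₂ p.2 - 1) := by
    filter_upwards [Hpos] with p hp
    rcases eq_or_lt_of_le (hf0 p) with h | h
    · simp [← h]
    · have ht : 0 < f p / f₂ p.2 := div_pos h (hp h)
      exact mul_le_mul_of_nonneg_left (log_le_sub_one_of_pos ht)
        (mul_nonneg (hφ0 p) (hf0 p))
  have hIle : ∫ p, φ p * f p * log (f p / f₂ p.2) ∂(ν₁.prod ν₂) ≤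
      ∫ p, φ p * f p * (f p / f₂ p.2 - 1) ∂(ν₁.prod ν₂) :=
    integral_mono_ae hint1 hint2 hae_le
  have hIle0 : ∫ p, φ p * f p * log (f p / f₂ p.2) ∂(ν₁.prod ν₂) ≤ 0 := hIle.trans hcond
  refine ⟨by linarith, ?_⟩
  constructor
  · -- equality → a.e. condition
    intro heq
    have hI0 : ∫ p, φ p * f p * log (f p / f₂ p.2) ∂(ν₁.prod ν₂) = 0 := by linarith
    -- the gap g ≥ 0 with zero integral
    set g := fun p => φ p * f p * (f p / f₂ p.2 - 1) - φ p * f p * log (f p / f₂ p.2) with hg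
    have hgint : Integrable g (ν₁.prod ν₂) := hint2.sub hint1
    have hg0 : 0 ≤ᵐ[ν₁.prod ν₂] g := by
      filter_upwards [hae_le] with p hp
      simp [hg, sub_nonneg, hp]
    have hgI : ∫ p, g p ∂(ν₁.prod ν₂) = 0 := by
      have : ∫ p, g p ∂(ν₁.prod ν₂) =
          (∫ p, φ p * f p * (f p / f₂ p.2 - 1) ∂(ν₁.prod ν₂)) -
          ∫ p, φ p * f p * log (f p / f₂ p.2) ∂(ν₁.prod ν₂) :=
        integral_sub hint2 hint1
      have hge : 0 ≤ ∫ p, g p ∂(ν₁.prod ν₂) := integral_nonneg_of_ae hg0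
      rw [this, hI0, sub_zero] at hge ⊢
      linarith
    have hgzero : g =ᵐ[ν₁.prod ν₂] 0 :=
      (integral_eq_zero_iff_of_nonneg_ae hg0 hgint).mp hgI
    filter_upwards [hgzero, Hpos] with p hgp hp hfp
    have hf₂p := hp hfp
    have ht : 0 < f p / f₂ p.2 := div_pos hfp hf₂p
    rcases eq_or_lt_of_le (hφ0 p) with hφ | hφ
    · simp [← hφ]
    · -- from g p = 0 and φ f > 0, deduce t = 1
      have hpf : 0 < φ p * f p := mul_pos hφ hfp
      have h1 : f p / f₂ p.2 - 1 - log (f p / f₂ p.2) = 0 := by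
        have : φ p * f p * (f p / f₂ p.2 - 1 - log (f p / f₂ p.2)) = 0 := by
          have := hgp; simp only [hg, Pi.zero_apply] at this
          ring_nf
          ring_nf at this
          linarith
        rcases mul_eq_zero.mp this with h | h
        · exact absurd h (ne_of_gt hpf)
        · exact h
      by_contra hne
      have htne : f p / f₂ p.2 ≠ 1 := by
        intro h1'
        apply hne
        rw [h1', sub_self, mul_zero]
      have := log_lt_sub_one_of_pos ht htne
      linarith
  · -- a.e. condition → equality
    intro hae
    have hzero : (fun p => φ p * f p * log (f p / f₂ p.2)) =ᵐ[ν₁.prod ν₂] 0 := by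
      filter_upwards [hae, Hpos] with p hp hp2
      rcases eq_or_lt_of_le (hf0 p) with h | h
      · simp [← h]
      · have hφt := hp h
        rcases mul_eq_zero.mp hφt with hφz | htz
        · simp [hφz]
        · have : f p / f₂ p.2 = 1 := by linarith
          simp [this]
    have : ∫ p, φ p * f p * log (f p / f₂ p.2) ∂(ν₁.prod ν₂) = 0 :=
      integral_eq_zero_of_ae hzero
    simp [this]
end

section
/- Sub-additivity of the weighted entropy (nonnegativity of mutual weighted entropy): Let f(x₁,x₂) be a joint probability density on X₁ × X₂ with respect to ν₁ ⊗ ν₂, with marginals f₁(x₁) = ∫_{X₂} f dν₂ and f₂(x₂) = ∫_{X₁} f dν₁, and let φ : X₁ × X₂ → [0,∞) be a measurable weight function such that all integrals involved converge absolutely. If ∫_{X₁×X₂} φ(x₁,x₂)·(f(x₁,x₂) − f₁(x₁)·f₂(x₂)) dν₁dν₂ ≥ 0, then the mutual weighted entropy i^w_φ(X₁:X₂) = ∫_{X₁×X₂} φ(x₁,x₂)·f(x₁,x₂)·log( f(x₁,x₂)/(f₁(x₁)·f₂(x₂)) ) dν₁dν₂ ≥ 0, with equality if and only if φ(x₁,x₂)·(1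 − f₁(x₁)f₂(x₂)/f(x₁,x₂)) = 0 for f-almost all (x₁,x₂) (i.e. X₁, X₂ are independent modulo φ). -/
open MeasureTheory Real

/-- **Sub-additivity of the weighted entropy (nonnegativity of mutual weighted entropy).**
For a joint probability density `f` on `X₁ × X₂` with marginals `f₁, f₂`, if
`∫ φ (f - f₁ ⊗ f₂) ≥ 0` then the mutual weighted entropy
`i^w_φ(X₁:X₂) = ∫ φ f log (f/(f₁ f₂))` is nonnegative, with equality iff
`φ (1 - f₁ f₂ / f) = 0` for `f`-almost all points. -/
theorem mutual_weighted_entropy_nonneg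
    {X₁ X₂ : Type*} [MeasurableSpace X₁] [MeasurableSpace X₂]
    (ν₁ : Measure X₁) (ν₂ : Measure X₂) [SigmaFinite ν₁] [SigmaFinite ν₂]
    (f φ : X₁ × X₂ → ℝ)
    (hfm : Measurable f) (hφm : Measurable φ)
    (hf0 : ∀ p, 0 ≤ f p) (hφ0 : ∀ p, 0 ≤ φ p)
    (hfprob : ∫ p, f p ∂(ν₁.prod ν₂) = 1)
    (f₁ : X₁ → ℝ) (hf₁ : ∀ x₁, f₁ x₁ = ∫ x₂, f (x₁, x₂) ∂ν₂)
    (f₂ : X₂ → ℝ) (hf₂ : ∀ x₂, f₂ x₂ = ∫ x₁, f (x₁, x₂) ∂ν₁)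
    (hint1 : Integrable (fun p => φ p * f p * log (f p / (f₁ p.1 * f₂ p.2))) (ν₁.prod ν₂))
    (hint2 : Integrable (fun p => φ p * (f p - f₁ p.1 * f₂ p.2)) (ν₁.prod ν₂))
    (hcond : 0 ≤ ∫ p, φ p * (f p - f₁ p.1 * f₂ p.2) ∂(ν₁.prod ν₂)) :
    0 ≤ ∫ p, φ p * f p * log (f p / (f₁ p.1 * f₂ p.2)) ∂(ν₁.prod ν₂) ∧
      ((∫ p, φ p * f p * log (f p / (f₁ p.1 * f₂ p.2)) ∂(ν₁.prod ν₂)) = 0 ↔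
        ∀ᵐ p ∂(ν₁.prod ν₂), 0 < f p → φ p * (1 - f₁ p.1 * f₂ p.2 / f p) = 0) := by
  -- f is integrable (otherwise its integral would be 0, not 1)
  have hfi : Integrable f (ν₁.prod ν₂) := by
    by_contra h
    rw [integral_undef h] at hfprob
    norm_num at hfprob
  have hf₁m : Measurable f₁ := by
    have hfe : f₁ = fun x₁ => ∫ x₂, f (x₁, x₂) ∂ν₂ := funext hf₁
    rw [hfe]
    exact (hfm.stronglyMeasurable.integral_prod_right').measurable
  have hf₂m : Measurable f₂ := by
    have hfe : f₂ = fun x₂ => ∫ x₁, f (x₁, x₂) ∂ν₁ := funext hf₂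
    rw [hfe]
    exact (hfm.stronglyMeasurable.integral_prod_left').measurable
  have hf₁0 : ∀ x₁, 0 ≤ f₁ x₁ := fun x₁ => (hf₁ x₁) ▸ integral_nonneg (fun x₂ => hf0 _)
  have hf₂0 : ∀ x₂, 0 ≤ f₂ x₂ := fun x₂ => (hf₂ x₂) ▸ integral_nonneg (fun x₁ => hf0 _)
  -- a.e., if the first marginal vanishes then f vanishes
  have h1 : ∀ᵐ p ∂(ν₁.prod ν₂), f₁ p.1 = 0 → f p = 0 := by
    have hTm : MeasurableSet {p : X₁ × X₂ | f₁ p.1 = 0 ∧ f p ≠ 0} := by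
      apply MeasurableSet.inter
      · exact (hf₁m.comp measurable_fst) (measurableSet_singleton 0)
      · exact (hfm (measurableSet_singleton 0)).compl
    have hT : (ν₁.prod ν₂) {p : X₁ × X₂ | f₁ p.1 = 0 ∧ f p ≠ 0} = 0 := by
      rw [Measure.prod_apply hTm]
      have hslice : ∀ᵐ x₁ ∂ν₁,
          ν₂ (Prod.mk x₁ ⁻¹' {p : X₁ × X₂ | f₁ p.1 = 0 ∧ f p ≠ 0}) = 0 := by
        filter_upwards [hfi.prod_right_ae] with x₁ hx
        by_cases hz : f₁ x₁ = 0
        · have hint0 : ∫ x₂, f (x₁, x₂) ∂ν₂ = 0 := by rw [← hf₁ x₁]; exact hz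
          have hae : ∀ᵐ x₂ ∂ν₂, f (x₁, x₂) = 0 :=
            (integral_eq_zero_iff_of_nonneg (fun x₂ => hf0 _) hx).mp hint0
          exact measure_mono_null (fun x₂ hx2 => hx2.2) (ae_iff.mp hae)
        · exact measure_mono_null (fun x₂ hx2 => (hz hx2.1)) measure_empty
      rw [lintegral_congr_ae hslice, lintegral_zero]
    simp only [ae_iff, Classical.not_imp]
    exact hT
  -- a.e., if the second marginal vanishes then f vanishes
  have h2 : ∀ᵐ p ∂(ν₁.prod ν₂), f₂ p.2 = 0 → f p = 0 := by
    have hTm : MeasurableSet {p : X₁ × X₂ | f₂ p.2 = 0 ∧ f p ≠ 0} := by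
      apply MeasurableSet.inter
      · exact (hf₂m.comp measurable_snd) (measurableSet_singleton 0)
      · exact (hfm (measurableSet_singleton 0)).compl
    have hT : (ν₁.prod ν₂) {p : X₁ × X₂ | f₂ p.2 = 0 ∧ f p ≠ 0} = 0 := by
      rw [Measure.prod_apply_symm hTm]
      have hslice : ∀ᵐ x₂ ∂ν₂,
          ν₁ ((fun x₁ => (x₁, x₂)) ⁻¹' {p : X₁ × X₂ | f₂ p.2 = 0 ∧ f p ≠ 0}) = 0 := by
        filter_upwards [hfi.prod_left_ae] with x₂ hx
        by_cases hz : f₂ x₂ = 0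
        · have hint0 : ∫ x₁, f (x₁, x₂) ∂ν₁ = 0 := by rw [← hf₂ x₂]; exact hz
          have hae : ∀ᵐ x₁ ∂ν₁, f (x₁, x₂) = 0 :=
            (integral_eq_zero_iff_of_nonneg (fun x₁ => hf0 _) hx).mp hint0
          exact measure_mono_null (fun x₁ hx1 => hx1.2) (ae_iff.mp hae)
        · exact measure_mono_null (fun x₁ hx1 => (hz hx1.1)) measure_empty
      rw [lintegral_congr_ae hslice, lintegral_zero]
    simp only [ae_iff, Classical.not_imp]
    exact hT
  -- a.e., f > 0 implies f₁ f₂ > 0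
  have hpos : ∀ᵐ p ∂(ν₁.prod ν₂), 0 < f p → 0 < f₁ p.1 * f₂ p.2 := by
    filter_upwards [h1, h2] with p hp1 hp2 hfp
    have h₁ : 0 < f₁ p.1 := by
      rcases (hf₁0 p.1).lt_or_eq with h | h
      · exact h
      · exact absurd (hp1 h.symm) (ne_of_gt hfp)
    have h₂ : 0 < f₂ p.2 := by
      rcases (hf₂0 p.2).lt_or_eq with h | h
      · exact h
      · exact absurd (hp2 h.symm) (ne_of_gt hfp)
    exact mul_pos h₁ h₂
  -- the pointwise key inequality
  have hle : ∀ᵐ p ∂(ν₁.prod ν₂),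
      φ p * (f p - f₁ p.1 * f₂ p.2) ≤ φ p * f p * log (f p / (f₁ p.1 * f₂ p.2)) := by
    filter_upwards [hpos] with p hp
    rcases (hf0 p).lt_or_eq with h0 | h0
    · -- 0 < f p
      have hc : 0 < f₁ p.1 * f₂ p.2 := hp h0
      set c := f₁ p.1 * f₂ p.2 with hcdef
      have h' : log (c / f p) ≤ c / f p - 1 := Real.log_le_sub_one_of_pos (div_pos hc h0)
      have hlog : log (c / f p) = - log (f p / c) := by rw [← Real.log_inv, inv_div]
      rw [hlog] at h'
      have h2' := mul_le_mul_of_nonneg_right h' h0.le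
      have h3 : c / f p * f p = c := div_mul_cancel₀ c h0.ne'
      have h4 : f p - c ≤ f p * log (f p / c) := by nlinarith
      nlinarith [mul_le_mul_of_nonneg_left h4 (hφ0 p)]
    · -- f p = 0
      rw [← h0, mul_zero, zero_mul, zero_sub]
      nlinarith [hφ0 p, mul_nonneg (hf₁0 p.1) (hf₂0 p.2)]
  have hmono := integral_mono_ae hint2 hint1 hle
  refine ⟨hcond.trans hmono, ?_, ?_⟩
  · -- equality implies independence modulo φ
    intro hz
    have hint3 : Integrable (fun p =>
        φ p * f p * log (f p / (f₁ p.1 * f₂ p.2)) - φ p * (f p - f₁ p.1 * f₂ p.2))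
        (ν₁.prod ν₂) := hint1.sub hint2
    have hnn : 0 ≤ᵐ[ν₁.prod ν₂] fun p =>
        φ p * f p * log (f p / (f₁ p.1 * f₂ p.2)) - φ p * (f p - f₁ p.1 * f₂ p.2) := by
      filter_upwards [hle] with p hp
      simpa using sub_nonneg.mpr hp
    have hdz : ∫ p, (φ p * f p * log (f p / (f₁ p.1 * f₂ p.2))
        - φ p * (f p - f₁ p.1 * f₂ p.2)) ∂(ν₁.prod ν₂) = 0 := by
      rw [integral_sub hint1 hint2, hz]
      linarith [hcond.trans hmono, hcond, hmono, hz ▸ hmono]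
    have hae0 := (integral_eq_zero_iff_of_nonneg_ae hnn hint3).mp hdz
    filter_upwards [hae0, hpos] with p hpeq hpp hfp
    have hc : 0 < f₁ p.1 * f₂ p.2 := hpp hfp
    rcases (hφ0 p).lt_or_eq with hφz | hφz
    · -- 0 < φ p : force f = f₁ f₂
      by_contra hne
      have hfc : f₁ p.1 * f₂ p.2 / f p ≠ 1 := by
        intro h1
        exact hne (by rw [h1, sub_self, mul_zero])
      have hstrict := Real.log_lt_sub_one_of_pos (div_pos hc hfp) hfc
      have hlog : log (f₁ p.1 * f₂ p.2 / f p) = - log (f p / (f₁ p.1 * f₂ p.2)) := by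
        rw [← Real.log_inv, inv_div]
      rw [hlog] at hstrict
      have h2' := mul_lt_mul_of_pos_right hstrict hfp
      have h3 : f₁ p.1 * f₂ p.2 / f p * f p = f₁ p.1 * f₂ p.2 :=
        div_mul_cancel₀ _ hfp.ne'
      have h4 : f p - f₁ p.1 * f₂ p.2 < f p * log (f p / (f₁ p.1 * f₂ p.2)) := by nlinarith
      have h5 := mul_lt_mul_of_pos_left h4 hφz
      have hpeq' : φ p * f p * log (f p / (f₁ p.1 * f₂ p.2))
          - φ p * (f p - f₁ p.1 * f₂ p.2) = 0 := hpeq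
      nlinarith [h5, hpeq']
    · rw [← hφz, zero_mul]
  · -- independence modulo φ implies the integral vanishes
    intro hcondae
    have hz : (fun p => φ p * f p * log (f p / (f₁ p.1 * f₂ p.2)))
        =ᵐ[ν₁.prod ν₂] (fun _ => 0) := by
      filter_upwards [hcondae, hpos] with p hp hppos
      rcases (hf0 p).lt_or_eq with h0 | h0
      · have hc : 0 < f₁ p.1 * f₂ p.2 := hppos h0
        rcases mul_eq_zero.mp (hp h0) with hφz | hsz
        · rw [hφz, zero_mul, zero_mul]
        · have heq : f₁ p.1 * f₂ p.2 = f p := by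
            have : f₁ p.1 * f₂ p.2 / f p = 1 := by linarith
            exact (div_eq_one_iff_eq h0.ne').mp this
          rw [← heq, div_self hc.ne', Real.log_one, mul_zero]
      · rw [← h0, mul_zero, zero_mul]
    rw [integral_congr_ae hz, integral_zero]
end

section
/- Bounds on conditional weighted entropy for triples: Let f(x₁,x₂,x₃) be a joint probability density on X₁ × X₂ × X₃ with respect to ν₁ ⊗ ν₂ ⊗ ν₃, with pair marginal f₂₃(x₂,x₃) = ∫_{X₁} f dν₁ and conditional density f_{1|23}(x₁|x₂,x₃) = f(x₁,x₂,x₃)/f₂₃(x₂,x₃), and let φ : X₁ × X₂ × X₃ → [0,∞) be a measurable weight function such that all integrals involved converge absolutely. Define ψ₂₃(x₂,x₃) = ∫_{X₁} φ(x₁,x₂,x₃)·f_{1|23}(x₁|x₂,x₃) dν₁(x₁). If ∫ φ·f·(f_{1|23} − 1) dν₁dν₂dν₃ ≤ 0, then −∫ φ(x₁,x₂,x₃)·f(x₁,x₂,x₃)·log f(x₁,x₂,x₃) dν₁dν₂dν₃ ≥ −∫_{X₂×X₃} ψ₂₃(x₂,x₃)·f₂₃(x₂,x₃)·log f₂₃(x₂,x₃)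 dν₂dν₃, i.e. h^w_φ(X₁,X₂,X₃) ≥ h^w_{ψ₂₃}(X₂,X₃); equality holds if and only if φ·(f_{1|23} − 1) = 0 for f-almost all (x₁,x₂,x₃). -/
/-!
Pointwise, `log t - log c = log (t / c) ≤ t / c - 1`, so
`φ f (log f - log f₂₃) ≤ φ f (f / f₂₃ - 1)` wherever `f₂₃ > 0`, which is `f`-almost everywhere,
with equality exactly where `φ (f / f₂₃ - 1) = 0`. Integrating out `x₁` turns
`∫ φ f log f₂₃` into `∫ ψ₂₃ f₂₃ log f₂₃`, so `h^w_{ψ₂₃} - h^w_φ ≤ ∫ φ f (f_{1|23} - 1) ≤ 0`, and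
equality of the entropies forces equality in the pointwise bound almost everywhere.
The delicate point is that `φ f log f₂₃` is integrable on the triple product: on each slice
`|log f₂₃| ≤ |log f| + 2 (1 + |log f₂₃|) |f / f₂₃ - 1|`, and the slice integrals of its absolute
value are `|ψ₂₃ f₂₃ log f₂₃|`.
-/

open MeasureTheory Real

lemma abs_log_le_two_mul_abs_sub_one {s : ℝ} (hs : 1 / 2 ≤ s) : |log s| ≤ 2 * |s - 1| := by
  have hs0 : 0 < s := by linarith
  have hinv : s⁻¹ ≤ 2 := by rw [inv_le_comm₀ hs0 two_pos]; linarith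
  have hlower : -(2 * |s - 1|) ≤ log s := calc
    -(2 * |s - 1|) ≤ -|s - 1| * s⁻¹ := by nlinarith [abs_nonneg (s - 1)]
    _ ≤ (s - 1) * s⁻¹ := mul_le_mul_of_nonneg_right (neg_abs_le _) (inv_nonneg.2 hs0.le)
    _ = 1 - s⁻¹ := by field_simp
    _ ≤ log s := one_sub_inv_le_log_of_pos hs0
  have hupper : log s ≤ 2 * |s - 1| :=
    (log_le_sub_one_of_pos hs0).trans (by linarith [le_abs_self (s - 1), abs_nonneg (s - 1)])
  exact abs_le.2 ⟨hlower, hupper⟩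

lemma abs_log_le_abs_log_add_mul_abs_div_sub_one {t c : ℝ} (hc : 0 < c) :
    |log c| ≤ |log t| + 2 * (1 + |log c|) * |t / c - 1| := by
  rcases lt_or_ge (t / c) (1 / 2) with hsmall | hlarge
  · have : 1 / 2 ≤ |t / c - 1| := by rw [abs_sub_comm, abs_of_pos (by linarith)]; linarith
    nlinarith [abs_nonneg (log t), abs_nonneg (log c)]
  · have ht0 : 0 < t := (div_pos_iff_of_pos_right hc).1 (by linarith)
    have hsplit : log c = log t - log (t / c) := by rw [log_div ht0.ne' hc.ne']; ring
    calc |log c| ≤ |log t| + |log (t / c)| := hsplit ▸ abs_sub _ _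
      _ ≤ |log t| + 2 * |t / c - 1| := by gcongr; exact abs_log_le_two_mul_abs_sub_one hlarge
      _ ≤ |log t| + 2 * (1 + |log c|) * |t / c - 1| := by
          gcongr; nlinarith [abs_nonneg (log c), abs_nonneg (t / c - 1)]

lemma mul_log_sub_mul_log_le {a t c : ℝ} (ha : 0 ≤ a) (ht : 0 ≤ t) (hc : 0 < t → 0 < c) :
    a * t * log t - a * t * log c ≤ a * t * (t / c - 1) := by
  rcases ht.eq_or_lt with rfl | ht
  · simp
  have hc := hc ht
  rw [← mul_sub, ← log_div ht.ne' hc.ne']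
  exact mul_le_mul_of_nonneg_left (log_le_sub_one_of_pos (div_pos ht hc)) (by positivity)

lemma mul_log_sub_mul_log_eq_zero {a t c : ℝ} (ht : 0 ≤ t) (h : 0 < t → a * (t / c - 1) = 0) :
    a * t * log t - a * t * log c = 0 := by
  rcases ht.eq_or_lt with rfl | ht
  · simp
  rcases mul_eq_zero.1 (h ht) with rfl | h
  · simp
  · have hc : c ≠ 0 := by rintro rfl; simp at h
    rw [(div_eq_one_iff_eq hc).1 (sub_eq_zero.1 h), sub_self]

lemma mul_log_sub_mul_log_eq_iff {a t c : ℝ} (ht : 0 ≤ t) (hc : 0 < t → 0 < c) :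
    a * t * log t - a * t * log c = a * t * (t / c - 1) ↔ (0 < t → a * (t / c - 1) = 0) := by
  refine ⟨fun heq ht => ?_, fun h => ?_⟩
  · have hc := hc ht
    rw [← mul_sub, ← log_div ht.ne' hc.ne', ← sub_eq_zero, ← mul_sub] at heq
    rcases mul_eq_zero.1 heq with hat | hlog
    · rw [(mul_eq_zero_iff_right ht.ne').1 hat, zero_mul]
    · by_contra hne
      have hs : t / c ≠ 1 := fun h1 => hne (by rw [h1, sub_self, mul_zero])
      exact (log_lt_sub_one_of_pos (div_pos ht hc) hs).ne (sub_eq_zero.1 hlog)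
  · rw [mul_log_sub_mul_log_eq_zero ht h]
    rcases ht.eq_or_lt with rfl | ht
    · simp
    · rw [mul_comm a, mul_assoc, h ht, mul_zero]

section

variable {X Y : Type*} [MeasurableSpace X] [MeasurableSpace Y] {μ : Measure X} {ν : Measure Y}

lemma integral_mul_div_mul_mul_log (a b : X → ℝ) (c : ℝ) :
    (∫ x, a x * (b x / c) ∂μ) * c * log c = (∫ x, a x * b x ∂μ) * log c := by
  rcases eq_or_ne c 0 with rfl | hc
  · simp
  simp_rw [← mul_div_assoc, integral_div, div_mul_cancel₀ _ hc]

lemma integrable_mul_log_const {w t : X → ℝ} {c : ℝ} (hw : AEStronglyMeasurable w μ)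
    (hw0 : ∀ x, 0 ≤ w x) (hc : 0 < c)
    (hlog : Integrable (fun x => w x * log (t x)) μ)
    (hdev : Integrable (fun x => w x * (t x / c - 1)) μ) :
    Integrable (fun x => w x * log c) μ := by
  refine (hlog.norm.add (hdev.norm.const_mul (2 * (1 + |log c|)))).mono'
    (hw.mul_const _) (Filter.Eventually.of_forall fun x => ?_)
  simp only [Pi.add_apply, norm_mul, Real.norm_eq_abs, abs_of_nonneg (hw0 x)]
  have hbound := mul_le_mul_of_nonneg_left
    (abs_log_le_abs_log_add_mul_abs_div_sub_one (t := t x) hc) (hw0 x)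
  linarith

lemma integrable_mul_log_snd [SFinite μ] [SFinite ν] {w t : X × Y → ℝ} {c : Y → ℝ}
    (hw : Measurable w) (hc : Measurable c)
    (hw0 : ∀ p, 0 ≤ w p) (hc0 : ∀ y, 0 ≤ c y)
    (hlog : Integrable (fun p => w p * log (t p)) (μ.prod ν))
    (hdev : Integrable (fun p => w p * (t p / c p.2 - 1)) (μ.prod ν))
    (hmarg : Integrable (fun y => (∫ x, w (x, y) ∂μ) * log (c y)) ν) :
    Integrable (fun p => w p * log (c p.2)) (μ.prod ν) := by
  refine (integrable_prod_iff' ?_).2 ⟨?_, ?_⟩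
  · exact (hw.mul (hc.comp measurable_snd).log).aestronglyMeasurable
  · filter_upwards [hlog.prod_left_ae, hdev.prod_left_ae] with y hlog_y hdev_y
    rcases (hc0 y).eq_or_lt with hy | hy
    · simp [← hy]
    · exact integrable_mul_log_const (hw.comp measurable_prodMk_right).aestronglyMeasurable
        (fun x => hw0 _) hy hlog_y hdev_y
  · refine hmarg.norm.congr (Filter.Eventually.of_forall fun y => ?_)
    have hmass : 0 ≤ ∫ x, w (x, y) ∂μ := integral_nonneg fun x => hw0 (x, y)
    simp only [norm_mul, Real.norm_eq_abs, abs_of_nonneg (hw0 _), abs_of_nonneg hmass,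
      integral_mul_const]

lemma ae_pos_integral_slice_of_pos [SFinite μ] [SFinite ν] {t : X × Y → ℝ} (ht : Measurable t)
    (ht0 : ∀ p, 0 ≤ t p) (hint : Integrable t (μ.prod ν)) :
    ∀ᵐ p ∂μ.prod ν, 0 < t p → 0 < ∫ x, t (x, p.2) ∂μ := by
  have hmeas : MeasurableSet {p : X × Y | 0 < t p → 0 < ∫ x, t (x, p.2) ∂μ} :=
    (measurableSet_lt measurable_const ht).himp (measurableSet_lt measurable_const
      (ht.stronglyMeasurable.integral_prod_left'.measurable.comp measurable_snd))
  rw [Measure.ae_prod_iff_ae_ae hmeas, Measure.ae_ae_comm hmeas]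
  filter_upwards [hint.prod_left_ae] with y hy
  have hmass : 0 ≤ ∫ x, t (x, y) ∂μ := integral_nonneg fun x => ht0 (x, y)
  rcases hmass.eq_or_lt with hzero | hpos
  · have hnull : (fun x => t (x, y)) =ᵐ[μ] 0 :=
      (integral_eq_zero_iff_of_nonneg (fun x => ht0 (x, y)) hy).1 hzero.symm
    filter_upwards [hnull] with x hx htx
    exact absurd hx htx.ne'
  · exact Filter.Eventually.of_forall fun _ _ => hpos

end

/-- **Bounds on conditional weighted entropy for triples.** For a joint probability
density `f` on `X₁ × X₂ × X₃` with pair marginal `f₂₃` and reduced weight function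
`ψ₂₃(q) = ∫ φ(x₁,q) f_{1|23}(x₁|q) dν₁`, if `∫ φ f (f_{1|23} - 1) ≤ 0` then
`h^w_φ(X₁,X₂,X₃) = -∫ φ f log f ≥ -∫ ψ₂₃ f₂₃ log f₂₃ = h^w_{ψ₂₃}(X₂,X₃)`,
with equality iff `φ (f_{1|23} - 1) = 0` for `f`-almost all points. -/
theorem weighted_entropy_triple_ge_pair
    {X₁ X₂ X₃ : Type*} [MeasurableSpace X₁] [MeasurableSpace X₂] [MeasurableSpace X₃]
    (ν₁ : Measure X₁) (ν₂ : Measure X₂) (ν₃ : Measure X₃)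
    [SigmaFinite ν₁] [SigmaFinite ν₂] [SigmaFinite ν₃]
    (f φ : X₁ × X₂ × X₃ → ℝ)
    (hfm : Measurable f) (hφm : Measurable φ)
    (hf0 : ∀ p, 0 ≤ f p) (hφ0 : ∀ p, 0 ≤ φ p)
    (hfprob : ∫ p, f p ∂(ν₁.prod (ν₂.prod ν₃)) = 1)
    (f₂₃ : X₂ × X₃ → ℝ) (hf₂₃ : ∀ q, f₂₃ q = ∫ x₁, f (x₁, q) ∂ν₁)
    (ψ₂₃ : X₂ × X₃ → ℝ)
    (hψ₂₃ : ∀ q, ψ₂₃ q = ∫ x₁, φ (x₁, q) * (f (x₁, q) / f₂₃ q) ∂ν₁)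
    (hint1 : Integrable (fun p => φ p * f p * log (f p)) (ν₁.prod (ν₂.prod ν₃)))
    (hint2 : Integrable (fun q => ψ₂₃ q * f₂₃ q * log (f₂₃ q)) (ν₂.prod ν₃))
    (hint3 : Integrable (fun p => φ p * f p * (f p / f₂₃ p.2 - 1)) (ν₁.prod (ν₂.prod ν₃)))
    (hcond : ∫ p, φ p * f p * (f p / f₂₃ p.2 - 1) ∂(ν₁.prod (ν₂.prod ν₃)) ≤ 0) :
    (-∫ q, ψ₂₃ q * f₂₃ q * log (f₂₃ q) ∂(ν₂.prod ν₃))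
        ≤ -∫ p, φ p * f p * log (f p) ∂(ν₁.prod (ν₂.prod ν₃)) ∧
      ((-∫ p, φ p * f p * log (f p) ∂(ν₁.prod (ν₂.prod ν₃)))
          = -∫ q, ψ₂₃ q * f₂₃ q * log (f₂₃ q) ∂(ν₂.prod ν₃) ↔
        ∀ᵐ p ∂(ν₁.prod (ν₂.prod ν₃)), 0 < f p → φ p * (f p / f₂₃ p.2 - 1) = 0) := by
  have hf₂₃m : Measurable f₂₃ := by
    rw [funext hf₂₃]; exact hfm.stronglyMeasurable.integral_prod_left'.measurable
  have hreduced : ∀ q, ψ₂₃ q * f₂₃ q * log (f₂₃ q)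
      = (∫ x₁, φ (x₁, q) * f (x₁, q) ∂ν₁) * log (f₂₃ q) := fun q => by
    rw [hψ₂₃]; exact integral_mul_div_mul_mul_log _ _ _
  have hcross : Integrable (fun p => φ p * f p * log (f₂₃ p.2)) (ν₁.prod (ν₂.prod ν₃)) :=
    integrable_mul_log_snd (hφm.mul hfm) hf₂₃m (fun p => mul_nonneg (hφ0 p) (hf0 p))
      (fun q => (hf₂₃ q).symm ▸ integral_nonneg fun x₁ => hf0 (x₁, q)) hint1 hint3
      (by simpa only [hreduced] using hint2)
  have hJ : ∫ q, ψ₂₃ q * f₂₃ q * log (f₂₃ q) ∂(ν₂.prod ν₃)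
      = ∫ p, φ p * f p * log (f₂₃ p.2) ∂(ν₁.prod (ν₂.prod ν₃)) := by
    simp only [hreduced, ← integral_mul_const]
    exact (integral_prod_symm _ hcross).symm
  have hpos : ∀ᵐ p ∂(ν₁.prod (ν₂.prod ν₃)), 0 < f p → 0 < f₂₃ p.2 := by
    simpa only [hf₂₃] using ae_pos_integral_slice_of_pos hfm hf0
      (Integrable.of_integral_ne_zero (by rw [hfprob]; exact one_ne_zero))
  have hdiff : ∫ p, φ p * f p * log (f p) - φ p * f p * log (f₂₃ p.2) ∂(ν₁.prod (ν₂.prod ν₃))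
      = ∫ p, φ p * f p * log (f p) ∂(ν₁.prod (ν₂.prod ν₃))
        - ∫ q, ψ₂₃ q * f₂₃ q * log (f₂₃ q) ∂(ν₂.prod ν₃) := by
    rw [integral_sub hint1 hcross, hJ]
  have hpointwise : ∀ᵐ p ∂(ν₁.prod (ν₂.prod ν₃)),
      φ p * f p * log (f p) - φ p * f p * log (f₂₃ p.2) ≤ φ p * f p * (f p / f₂₃ p.2 - 1) :=
    hpos.mono fun p hp => mul_log_sub_mul_log_le (hφ0 p) (hf0 p) hp
  have hdiff_int : Integrable (fun p => φ p * f p * log (f p) - φ p * f p * log (f₂₃ p.2))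
      (ν₁.prod (ν₂.prod ν₃)) := hint1.sub hcross
  have hmono := integral_mono_ae hdiff_int hint3 hpointwise
  refine ⟨by linarith, ⟨fun heq => ?_, fun hφ_ae => ?_⟩⟩
  · have hae := (integral_eq_iff_of_ae_le hdiff_int hint3 hpointwise).1 (by linarith)
    filter_upwards [hae, hpos] with p hp hpos_p
    exact (mul_log_sub_mul_log_eq_iff (hf0 p) hpos_p).1 hp
  · have hdiff_zero : ∫ p, φ p * f p * log (f p) - φ p * f p * log (f₂₃ p.2)
        ∂(ν₁.prod (ν₂.prod ν₃)) = 0 :=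
      integral_eq_zero_of_ae (hφ_ae.mono fun p hp => mul_log_sub_mul_log_eq_zero (hf0 p) hp)
    linarith
end

section
/- Sub-additivity of the conditional weighted entropy: Let f(x₁,x₂,x₃) be a joint probability density on X₁ × X₂ × X₃ with respect to ν₁ ⊗ ν₂ ⊗ ν₃, with marginal f₂(x₂), pair marginals f₁₂, f₂₃, f₁₃, and conditional densities f_{1|2} = f₁₂/f₂, f_{3|2} = f₂₃/f₂, f_{13|2}(x₁,x₃|x₂) = f₁₃₂(x₁,x₂,x₃)/f₂(x₂) (here f₁₃₂ = f), and let φ : X₁ × X₂ × X₃ → [0,∞) be a measurable weight function such that all integrals involved converge absolutely. If ∫ φ(x₁,x₂,x₃)·( f(x₁,x₂,x₃) − f₂(x₂)·f_{1|2}(x₁|x₂)·f_{3|2}(x₃|x₂) ) dν₁dν₂dν₃ ≥ 0, then ∫ φ·f·log( f₂(x₂)·f_{1|2}(x₁|x₂)·f_{3|2}(x₃|x₂) / f(x₁,x₂,x₃) ) dν₁dν₂dν₃ ≤ 0; equivalently, −∫ φ·f·log( f(x₁,x₂,x₃)/f₂(x₂) ) ≤ −∫ φ·f·log f_{1|2}(x₁|x₂)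 − ∫ φ·f·log f_{3|2}(x₃|x₂) (all integrals over X₁ × X₂ × X₃ against ν₁⊗ν₂⊗ν₃). Equality holds if and only if φ·( f − f₂·f_{1|2}·f_{3|2} ) = 0 for f-almost all (x₁,x₂,x₃), i.e. X₁ and X₃ are conditionally independent given X₂ modulo φ. -/
open MeasureTheory Real

lemma msImp {α : Type*} [MeasurableSpace α] {u v : α → ℝ}
    (hu : Measurable u) (hv : Measurable v) :
    MeasurableSet {p | 0 < u p → 0 < v p} := by
  have : {p | 0 < u p → 0 < v p} = {p | 0 < u p}ᶜ ∪ {p | 0 < v p} := by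
    ext p; simp [imp_iff_not_or]
  rw [this]
  exact (measurableSet_lt measurable_const hu).compl.union
    (measurableSet_lt measurable_const hv)

lemma marg_pos {A B : Type*} [MeasurableSpace A] [MeasurableSpace B]
    (κ : Measure A) (τ : Measure B) [SigmaFinite κ] [SigmaFinite τ]
    (h : A × B → ℝ) (hm : Measurable h) (h0 : ∀ p, 0 ≤ h p)
    (hi : Integrable h (κ.prod τ))
    (m : A → ℝ) (hmm : Measurable m)
    (hme : ∀ a, Integrable (fun b => h (a, b)) τ → m a = ∫ b, h (a, b) ∂τ) :
    ∀ᵐ p ∂κ.prod τ, 0 < h p → 0 < m p.1 := by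
  rw [Measure.ae_prod_iff_ae_ae (p := fun p : A × B => 0 < h p → 0 < m p.1)
      (msImp hm (hmm.comp measurable_fst))]
  filter_upwards [hi.prod_right_ae] with a hint
  rcases lt_or_ge 0 (m a) with hpos | hle
  · exact Filter.Eventually.of_forall fun b _ => hpos
  · have hnn : (0:ℝ) ≤ ∫ b, h (a, b) ∂τ := integral_nonneg fun b => h0 _
    have hz : ∫ b, h (a, b) ∂τ = 0 := le_antisymm (by rw [← hme a hint]; exact hle) hnn
    have hae : (fun b => h (a, b)) =ᵐ[τ] 0 :=
      (integral_eq_zero_iff_of_nonneg_ae (Filter.Eventually.of_forall fun b => h0 _) hint).mp hz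
    filter_upwards [hae] with b hb hlt
    simp only [Pi.zero_apply] at hb
    rw [hb] at hlt
    exact absurd hlt (lt_irrefl 0)

lemma core {α : Type*} [MeasurableSpace α] (μ : Measure α) (f φ g : α → ℝ)
    (hφ0 : ∀ p, 0 ≤ φ p) (hf0 : ∀ p, 0 ≤ f p) (hg0 : ∀ p, 0 ≤ g p)
    (hpos : ∀ᵐ p ∂μ, 0 < f p → 0 < g p)
    (hint1 : Integrable (fun p => φ p * f p * log (g p / f p)) μ)
    (hint2 : Integrable (fun p => φ p * (f p - g p)) μ)
    (hcond : 0 ≤ ∫ p, φ p * (f p - g p) ∂μ) :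
    (∫ p, φ p * f p * log (g p / f p) ∂μ) ≤ 0 ∧
      ((∫ p, φ p * f p * log (g p / f p) ∂μ) = 0 ↔
        ∀ᵐ p ∂μ, 0 < f p → φ p * (f p - g p) = 0) := by
  have hint2' : Integrable (fun p => φ p * (g p - f p)) μ :=
    hint2.neg.congr (Filter.Eventually.of_forall fun p => by simp; ring)
  have hIR : ∫ p, φ p * (g p - f p) ∂μ = -∫ p, φ p * (f p - g p) ∂μ := by
    rw [← integral_neg]
    exact integral_congr_ae (Filter.Eventually.of_forall fun p => by simp; ring)
  have hRle : ∫ p, φ p * (g p - f p) ∂μ ≤ 0 := by rw [hIR]; linarith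
  have key : ∀ᵐ p ∂μ, φ p * f p * log (g p / f p) ≤ φ p * (g p - f p) := by
    filter_upwards [hpos] with p hp
    rcases (hf0 p).lt_or_eq with hfp | hfp
    · have hg : 0 < g p := hp hfp
      have hlog : log (g p / f p) ≤ g p / f p - 1 :=
        Real.log_le_sub_one_of_pos (div_pos hg hfp)
      calc φ p * f p * log (g p / f p) ≤ φ p * f p * (g p / f p - 1) :=
            mul_le_mul_of_nonneg_left hlog (mul_nonneg (hφ0 p) hfp.le)
        _ = φ p * (g p - f p) := by field_simp
    · rw [← hfp, mul_zero, zero_mul, sub_zero]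
      exact mul_nonneg (hφ0 p) (hg0 p)
  have hLle : ∫ p, φ p * f p * log (g p / f p) ∂μ ≤ ∫ p, φ p * (g p - f p) ∂μ :=
    integral_mono_ae hint1 hint2' key
  refine ⟨hLle.trans hRle, ?_, ?_⟩
  · intro h0
    have hRz : ∫ p, φ p * (g p - f p) ∂μ = 0 :=
      le_antisymm hRle (h0 ▸ hLle)
    have hRL : Integrable (fun p => φ p * (g p - f p) - φ p * f p * log (g p / f p)) μ :=
      hint2'.sub hint1
    have hz : ∫ p, (φ p * (g p - f p) - φ p * f p * log (g p / f p)) ∂μ = 0 := by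
      rw [integral_sub hint2' hint1, hRz, h0, sub_zero]
    have hae : (fun p => φ p * (g p - f p) - φ p * f p * log (g p / f p)) =ᵐ[μ] 0 :=
      (integral_eq_zero_iff_of_nonneg_ae (key.mono fun p h => sub_nonneg.2 h) hRL).mp hz
    filter_upwards [hae, hpos] with p hep hposp hfp
    simp only [Pi.zero_apply] at hep
    have hgp : 0 < g p := hposp hfp
    rcases (hφ0 p).lt_or_eq with hφp | hφp
    · by_contra hne
      have hgf : g p ≠ f p := fun h => hne (by rw [h, sub_self, mul_zero])
      have hx : g p / f p ≠ 1 := fun h => hgf (by field_simp at h; linarith)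
      have hlt : log (g p / f p) < g p / f p - 1 :=
        Real.log_lt_sub_one_of_pos (div_pos hgp hfp) hx
      have : φ p * f p * log (g p / f p) < φ p * (g p - f p) := by
        calc φ p * f p * log (g p / f p) < φ p * f p * (g p / f p - 1) :=
              (mul_lt_mul_iff_right₀ (mul_pos hφp hfp)).mpr hlt
          _ = φ p * (g p - f p) := by field_simp
      linarith
    · rw [← hφp, zero_mul]
  · intro hae
    have hz : (fun p => φ p * f p * log (g p / f p)) =ᵐ[μ] 0 := by
      filter_upwards [hae] with p hp
      simp only [Pi.zero_apply]
      rcases (hf0 p).lt_or_eq with hfp | hfp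
      · rcases mul_eq_zero.mp (hp hfp) with hφ | hfg
        · rw [hφ, zero_mul, zero_mul]
        · have hgf : g p = f p := by linarith [sub_eq_zero.mp hfg]
          rw [hgf, div_self hfp.ne', Real.log_one, mul_zero]
      · rw [← hfp, mul_zero, zero_mul]
    rw [integral_congr_ae hz]; simp

/-- **Sub-additivity of the conditional weighted entropy.** For a joint probability
density `f` on `X₁ × X₂ × X₃` with marginal `f₂` and pair marginals `f₁₂, f₂₃`,
conditional densities `f_{1|2} = f₁₂/f₂`, `f_{3|2} = f₂₃/f₂`, if
`∫ φ (f - f₂ f_{1|2} f_{3|2}) ≥ 0` then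
`∫ φ f log (f₂ f_{1|2} f_{3|2} / f) ≤ 0`, with equality iff
`φ (f - f₂ f_{1|2} f_{3|2}) = 0` for `f`-almost all points. -/
theorem conditional_weighted_entropy_subadditive
    {X₁ X₂ X₃ : Type*} [MeasurableSpace X₁] [MeasurableSpace X₂] [MeasurableSpace X₃]
    (ν₁ : Measure X₁) (ν₂ : Measure X₂) (ν₃ : Measure X₃)
    [SigmaFinite ν₁] [SigmaFinite ν₂] [SigmaFinite ν₃]
    (f φ : X₁ × X₂ × X₃ → ℝ)
    (hfm : Measurable f) (hφm : Measurable φ)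
    (hf0 : ∀ p, 0 ≤ f p) (hφ0 : ∀ p, 0 ≤ φ p)
    (hfprob : ∫ p, f p ∂(ν₁.prod (ν₂.prod ν₃)) = 1)
    (f₂ : X₂ → ℝ) (hf₂ : ∀ x₂, f₂ x₂ = ∫ x₁, (∫ x₃, f (x₁, x₂, x₃) ∂ν₃) ∂ν₁)
    (f₁₂ : X₁ × X₂ → ℝ) (hf₁₂ : ∀ x₁ x₂, f₁₂ (x₁, x₂) = ∫ x₃, f (x₁, x₂, x₃) ∂ν₃)
    (f₂₃ : X₂ × X₃ → ℝ) (hf₂₃ : ∀ q, f₂₃ q = ∫ x₁, f (x₁, q) ∂ν₁)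
    (hint1 : Integrable (fun p => φ p * f p *
        log (f₂ p.2.1 * (f₁₂ (p.1, p.2.1) / f₂ p.2.1) * (f₂₃ p.2 / f₂ p.2.1) / f p))
        (ν₁.prod (ν₂.prod ν₃)))
    (hint2 : Integrable (fun p => φ p *
        (f p - f₂ p.2.1 * (f₁₂ (p.1, p.2.1) / f₂ p.2.1) * (f₂₃ p.2 / f₂ p.2.1)))
        (ν₁.prod (ν₂.prod ν₃)))
    (hcond : 0 ≤ ∫ p, φ p *
        (f p - f₂ p.2.1 * (f₁₂ (p.1, p.2.1) / f₂ p.2.1) * (f₂₃ p.2 / f₂ p.2.1))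
        ∂(ν₁.prod (ν₂.prod ν₃))) :
    (∫ p, φ p * f p *
        log (f₂ p.2.1 * (f₁₂ (p.1, p.2.1) / f₂ p.2.1) * (f₂₃ p.2 / f₂ p.2.1) / f p)
        ∂(ν₁.prod (ν₂.prod ν₃))) ≤ 0 ∧
      ((∫ p, φ p * f p *
          log (f₂ p.2.1 * (f₁₂ (p.1, p.2.1) / f₂ p.2.1) * (f₂₃ p.2 / f₂ p.2.1) / f p)
          ∂(ν₁.prod (ν₂.prod ν₃))) = 0 ↔
        ∀ᵐ p ∂(ν₁.prod (ν₂.prod ν₃)), 0 < f p →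
          φ p * (f p - f₂ p.2.1 * (f₁₂ (p.1, p.2.1) / f₂ p.2.1) * (f₂₃ p.2 / f₂ p.2.1)) = 0) := by
  set μ := ν₁.prod (ν₂.prod ν₃) with hμ
  -- f is integrable
  have hfi : Integrable f μ := by
    by_contra h
    rw [integral_undef h] at hfprob
    exact one_ne_zero hfprob.symm
  -- nonnegativity of marginals
  have hf₁₂0 : ∀ q : X₁ × X₂, 0 ≤ f₁₂ q := fun q => by
    rw [hf₁₂ q.1 q.2]; exact integral_nonneg fun x₃ => hf0 _
  have hf₂₃0 : ∀ q, 0 ≤ f₂₃ q := fun q => by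
    rw [hf₂₃ q]; exact integral_nonneg fun x₁ => hf0 _
  have hf₂0 : ∀ x₂, 0 ≤ f₂ x₂ := fun x₂ => by
    rw [hf₂ x₂]; exact integral_nonneg fun x₁ => integral_nonneg fun x₃ => hf0 _
  -- measurability of marginals
  have hmf₁₂ : Measurable f₁₂ := by
    have : f₁₂ = fun q : X₁ × X₂ => ∫ x₃, (f ∘ MeasurableEquiv.prodAssoc) (q, x₃) ∂ν₃ :=
      funext fun q => hf₁₂ q.1 q.2
    rw [this]
    exact ((hfm.comp MeasurableEquiv.prodAssoc.measurable).stronglyMeasurable.integral_prod_right').measurable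
  have hmf₂₃ : Measurable f₂₃ := by
    have : f₂₃ = fun q : X₂ × X₃ => ∫ x₁, f (x₁, q) ∂ν₁ := funext fun q => hf₂₃ q
    rw [this]
    exact (hfm.stronglyMeasurable.integral_prod_left').measurable
  have hmf₂ : Measurable f₂ := by
    have : f₂ = fun x₂ => ∫ x₁, f₁₂ (x₁, x₂) ∂ν₁ := by
      funext x₂
      rw [hf₂ x₂]
      exact integral_congr_ae (Filter.Eventually.of_forall fun x₁ => (hf₁₂ x₁ x₂).symm)
    rw [this]
    exact (hmf₁₂.stronglyMeasurable.integral_prod_left').measurable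
  -- Claim A : a.e. 0 < f p → 0 < f₁₂ (p.1, p.2.1)
  have mpA := measurePreserving_prodAssoc ν₁ ν₂ ν₃
  have hA : ∀ᵐ p ∂μ, 0 < f p → 0 < f₁₂ (p.1, p.2.1) := by
    have hiA : Integrable (f ∘ MeasurableEquiv.prodAssoc) ((ν₁.prod ν₂).prod ν₃) :=
      (integrable_map_equiv MeasurableEquiv.prodAssoc f).mp (by rw [mpA.map_eq]; exact hfi)
    have hmain := marg_pos (ν₁.prod ν₂) ν₃ (f ∘ MeasurableEquiv.prodAssoc)
      (hfm.comp MeasurableEquiv.prodAssoc.measurable) (fun p => hf0 _) hiA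
      f₁₂ hmf₁₂ (fun q _ => hf₁₂ q.1 q.2)
    exact (mpA.symm MeasurableEquiv.prodAssoc).quasiMeasurePreserving.ae hmain
  -- Claim B : a.e. 0 < f p → 0 < f₂₃ p.2
  have hB : ∀ᵐ p ∂μ, 0 < f p → 0 < f₂₃ p.2 := by
    have hiB : Integrable (f ∘ Prod.swap) ((ν₂.prod ν₃).prod ν₁) := hfi.swap
    have hmain := marg_pos (ν₂.prod ν₃) ν₁ (f ∘ Prod.swap)
      (hfm.comp measurable_swap) (fun p => hf0 _) hiB
      f₂₃ hmf₂₃ (fun q _ => hf₂₃ q)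
    exact (Measure.measurePreserving_swap (μ := ν₁) (ν := ν₂.prod ν₃)).quasiMeasurePreserving.ae hmain
  -- Claim C : a.e. 0 < f p → 0 < f₂ p.2.1
  have hC : ∀ᵐ p ∂μ, 0 < f p → 0 < f₂ p.2.1 := by
    let eC : X₂ × (X₁ × X₃) ≃ᵐ X₁ × X₂ × X₃ :=
      MeasurableEquiv.prodAssoc.symm.trans
        ((MeasurableEquiv.prodComm.prodCongr (MeasurableEquiv.refl X₃)).trans
          MeasurableEquiv.prodAssoc)
    have mpC : MeasurePreserving eC (ν₂.prod (ν₁.prod ν₃)) μ := by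
      have mp1 := (measurePreserving_prodAssoc ν₂ ν₁ ν₃).symm MeasurableEquiv.prodAssoc
      have mp2 : MeasurePreserving (Prod.map Prod.swap (id : X₃ → X₃))
          ((ν₂.prod ν₁).prod ν₃) ((ν₁.prod ν₂).prod ν₃) :=
        Measure.measurePreserving_swap.prod (MeasurePreserving.id ν₃)
      have mp3 := measurePreserving_prodAssoc ν₁ ν₂ ν₃
      exact mp3.comp (mp2.comp mp1)
    have hiC : Integrable (f ∘ eC) (ν₂.prod (ν₁.prod ν₃)) :=
      (integrable_map_equiv eC f).mp (by rw [mpC.map_eq]; exact hfi)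
    have hmain := marg_pos ν₂ (ν₁.prod ν₃) (f ∘ eC)
      (hfm.comp eC.measurable) (fun p => hf0 _) hiC
      f₂ hmf₂ (fun x₂ hint => by rw [hf₂ x₂, integral_prod _ hint]; rfl)
    exact (mpC.symm eC).quasiMeasurePreserving.ae hmain
  -- nonnegativity and positivity of g
  have hg0 : ∀ p : X₁ × X₂ × X₃,
      0 ≤ f₂ p.2.1 * (f₁₂ (p.1, p.2.1) / f₂ p.2.1) * (f₂₃ p.2 / f₂ p.2.1) :=
    fun p => mul_nonneg (mul_nonneg (hf₂0 _) (div_nonneg (hf₁₂0 _) (hf₂0 _)))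
      (div_nonneg (hf₂₃0 _) (hf₂0 _))
  have hgpos : ∀ᵐ p ∂μ, 0 < f p →
      0 < f₂ p.2.1 * (f₁₂ (p.1, p.2.1) / f₂ p.2.1) * (f₂₃ p.2 / f₂ p.2.1) := by
    filter_upwards [hA, hB, hC] with p h1 h2 h3 hfp
    exact mul_pos (mul_pos (h3 hfp) (div_pos (h1 hfp) (h3 hfp)))
      (div_pos (h2 hfp) (h3 hfp))
  exact core μ f φ
    (fun p => f₂ p.2.1 * (f₁₂ (p.1, p.2.1) / f₂ p.2.1) * (f₂₃ p.2 / f₂ p.2.1))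
    hφ0 hf0 hg0 hgpos hint1 hint2 hcond
end

section
/- Conditioning reduces conditional weighted entropy: Let f(x₁,x₂,x₃) be a joint probability density on X₁ × X₂ × X₃ with respect to ν₁ ⊗ ν₂ ⊗ ν₃, with marginals f₂, f₂₃ and conditional densities f_{1|2}(x₁|x₂) = f₁₂(x₁,x₂)/f₂(x₂) and f_{1|23}(x₁|x₂,x₃) = f(x₁,x₂,x₃)/f₂₃(x₂,x₃), and let φ : X₁ × X₂ × X₃ → [0,∞) be a measurable weight function such that all integrals involved converge absolutely. If ∫ φ(x₁,x₂,x₃)·( f(x₁,x₂,x₃) − f₂(x₂)·f_{1|2}(x₁|x₂)·f_{3|2}(x₃|x₂) ) dν₁dν₂dν₃ ≥ 0, then −∫ φ·f·log f_{1|23}(x₁|x₂,x₃) dν₁dν₂dν₃ ≤ −∫ φ·f·log f_{1|2}(x₁|x₂) dν₁dν₂dν₃; equality holds if and only if, modulo φ, X₁ and X₃ are conditionally independent given X₂ (i.e. φ·(f − f₂·f_{1|2}·f_{3|2}) = 0 for f-almost all (x₁,x₂,x₃)). -/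
/-!
Write `G = f₂ f_{1|2} f_{3|2}`. On the support of `f` the marginals `f₂₃, f₁₂, f₂` are almost
everywhere positive, and there `log f_{1|23} - log f_{1|2} = log (f / G)`. Since
`a - g ≤ a log (a / g)`, with equality only at `a = g`, the integrand of the entropy difference
dominates `φ (f - G)`, whose integral is nonnegative by hypothesis. Equality of the entropies
forces the two integrands to agree almost everywhere, hence `f = G` wherever `φ f > 0`.
-/

open MeasureTheory Real Filter InformationTheory

section Elementary

variable {w a b c d g : ℝ}

lemma mul_log_div_sub_sub_eq_mul_klFun (hg : 0 < g) :
    a * log (a / g) - (a - g) = g * klFun (a / g) := by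
  rw [klFun_apply]
  field_simp
  ring

lemma sub_le_mul_log_div (ha : 0 ≤ a) (hg : 0 < g) : a - g ≤ a * log (a / g) := by
  have := mul_nonneg hg.le (klFun_nonneg (div_nonneg ha hg.le))
  linarith [mul_log_div_sub_sub_eq_mul_klFun (a := a) hg]

lemma mul_log_div_eq_sub_iff (ha : 0 ≤ a) (hg : 0 < g) : a * log (a / g) = a - g ↔ a = g := by
  rw [← sub_eq_zero, mul_log_div_sub_sub_eq_mul_klFun hg, mul_eq_zero,
    klFun_eq_zero_iff (div_nonneg ha hg.le), div_eq_one_iff_eq hg.ne']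
  simp [hg.ne']

lemma mul_log_div_sub_mul_log_div (ha : 0 < a) (hb : 0 < b) (hc : 0 < c) (hd : 0 < d) :
    w * a * log (a / d) - w * a * log (b / c) = w * (a * log (a / (c * (b / c) * (d / c)))) := by
  rw [mul_assoc, mul_assoc, ← mul_sub, ← mul_sub, ← log_div (by positivity) (by positivity)]
  congr 3
  field_simp

lemma mul_sub_le_mul_log_div_sub (hw : 0 ≤ w) (ha : 0 ≤ a) (hb : 0 ≤ b) (hc : 0 ≤ c)
    (hd : 0 ≤ d) (hpos : 0 < a → 0 < b ∧ 0 < c ∧ 0 < d) :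
    w * (a - c * (b / c) * (d / c)) ≤ w * a * log (a / d) - w * a * log (b / c) := by
  rcases ha.eq_or_lt with rfl | ha
  · have : 0 ≤ w * (c * (b / c) * (d / c)) := by positivity
    simp only [zero_sub, mul_neg, zero_mul, mul_zero, sub_zero]
    linarith
  · obtain ⟨hb, hc, hd⟩ := hpos ha
    rw [mul_log_div_sub_mul_log_div ha hb hc hd]
    exact mul_le_mul_of_nonneg_left (sub_le_mul_log_div ha.le (by positivity)) hw

lemma mul_sub_eq_zero_of_mul_log_div_sub_eq (hpos : 0 < a → 0 < b ∧ 0 < c ∧ 0 < d)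
    (heq : w * a * log (a / d) - w * a * log (b / c) = w * (a - c * (b / c) * (d / c)))
    (ha : 0 < a) : w * (a - c * (b / c) * (d / c)) = 0 := by
  obtain ⟨hb, hc, hd⟩ := hpos ha
  rw [mul_log_div_sub_mul_log_div ha hb hc hd] at heq
  rcases eq_or_ne w 0 with rfl | hw
  · exact zero_mul _
  · rw [(mul_log_div_eq_sub_iff ha.le (by positivity)).1 (mul_left_cancel₀ hw heq), sub_self,
      mul_zero]

lemma mul_log_div_sub_eq_zero_of_mul_sub_eq_zero (ha : 0 ≤ a)
    (hpos : 0 < a → 0 < b ∧ 0 < c ∧ 0 < d) (h : 0 < a → w * (a - c * (b / c) * (d / c)) = 0) :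
    w * a * log (a / d) - w * a * log (b / c) = 0 := by
  rcases ha.eq_or_lt with rfl | ha
  · simp
  · obtain ⟨hb, hc, hd⟩ := hpos ha
    rw [mul_log_div_sub_mul_log_div ha hb hc hd]
    rcases mul_eq_zero.1 (h ha) with rfl | hG
    · exact zero_mul _
    · rw [sub_eq_zero.1 hG, div_self (by positivity), log_one, mul_zero, mul_zero]

end Elementary

section Marginals

variable {α β γ : Type*} [MeasurableSpace α] [MeasurableSpace β] [MeasurableSpace γ]
  {μ : Measure α} {ν : Measure β} {ρ : Measure γ}

lemma ae_pos_integral_right_of_pos [SFinite μ] [SFinite ν] {g : α × β → ℝ} (hgm : Measurable g)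
    (hg0 : ∀ z, 0 ≤ g z) (hgi : Integrable g (μ.prod ν)) :
    ∀ᵐ z ∂μ.prod ν, 0 < g z → 0 < ∫ y, g (z.1, y) ∂ν := by
  have hm : Measurable fun x => ∫ y, g (x, y) ∂ν :=
    hgm.stronglyMeasurable.integral_prod_right'.measurable
  refine (Measure.ae_prod_iff_ae_ae (measurableSet_setOfPred.2 ?_)).2 ?_
  · exact (measurableSet_setOfPred.1 (measurableSet_lt measurable_const hgm)).imp
      (measurableSet_setOfPred.1 (measurableSet_lt measurable_const (hm.comp measurable_fst)))
  · filter_upwards [hgi.prod_right_ae] with x hx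
    have hx0 : 0 ≤ fun y => g (x, y) := fun y => hg0 (x, y)
    rcases (integral_nonneg hx0).eq_or_lt with h0 | hpos
    · filter_upwards [(integral_eq_zero_iff_of_nonneg hx0 hx).1 h0.symm] with y hy hgy
      exact absurd hy hgy.ne'
    · exact Eventually.of_forall fun _ _ => hpos

lemma ae_pos_integral_left_of_pos [SFinite μ] [SFinite ν] {g : α × β → ℝ} (hgm : Measurable g)
    (hg0 : ∀ z, 0 ≤ g z) (hgi : Integrable g (μ.prod ν)) :
    ∀ᵐ z ∂μ.prod ν, 0 < g z → 0 < ∫ x, g (x, z.2) ∂μ :=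
  Measure.measurePreserving_swap.quasiMeasurePreserving.ae
    (ae_pos_integral_right_of_pos (hgm.comp measurable_swap) (fun _ => hg0 _) hgi.swap)

lemma quasiMeasurePreserving_fst_snd_fst [SFinite ν] [SFinite ρ] :
    Measure.QuasiMeasurePreserving (fun p : α × β × γ => (p.1, p.2.1))
      (μ.prod (ν.prod ρ)) (μ.prod ν) :=
  Measure.quasiMeasurePreserving_fst.comp
    ((measurePreserving_prodAssoc μ ν ρ).symm MeasurableEquiv.prodAssoc).quasiMeasurePreserving

lemma ae_pos_marginals_of_pos [SFinite μ] [SFinite ν] [SFinite ρ] {f : α × β × γ → ℝ}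
    (hfm : Measurable f) (hf0 : ∀ p, 0 ≤ f p) (hfi : Integrable f (μ.prod (ν.prod ρ)))
    {f₂ : β → ℝ} (hf₂ : ∀ y, f₂ y = ∫ x, (∫ z, f (x, y, z) ∂ρ) ∂μ)
    {f₁₂ : α × β → ℝ} (hf₁₂ : ∀ x y, f₁₂ (x, y) = ∫ z, f (x, y, z) ∂ρ)
    {f₂₃ : β × γ → ℝ} (hf₂₃ : ∀ q, f₂₃ q = ∫ x, f (x, q) ∂μ) :
    ∀ᵐ p ∂μ.prod (ν.prod ρ), 0 < f p → 0 < f₁₂ (p.1, p.2.1) ∧ 0 < f₂ p.2.1 ∧ 0 < f₂₃ p.2 := by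
  have hassoc := measurePreserving_prodAssoc μ ν ρ
  have hfAm : Measurable (f ∘ MeasurableEquiv.prodAssoc) := hfm.comp MeasurableEquiv.prodAssoc.measurable
  have hfAi : Integrable (f ∘ MeasurableEquiv.prodAssoc) ((μ.prod ν).prod ρ) :=
    (hassoc.integrable_comp_emb MeasurableEquiv.prodAssoc.measurableEmbedding).2 hfi
  have hf₁₂_eq : f₁₂ = fun w => ∫ z, f (w.1, w.2, z) ∂ρ := funext fun w => hf₁₂ w.1 w.2
  have hf₁₂m : Measurable f₁₂ := hf₁₂_eq ▸ hfAm.stronglyMeasurable.integral_prod_right'.measurable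
  have hf₁₂i : Integrable f₁₂ (μ.prod ν) := hf₁₂_eq ▸ hfAi.integral_prod_left
  have hf₁₂0 : ∀ w, 0 ≤ f₁₂ w := fun w => (hf₁₂ w.1 w.2).symm ▸ integral_nonneg fun _ => hf0 _
  have h₁₂ : ∀ᵐ p ∂μ.prod (ν.prod ρ), 0 < f p → 0 < f₁₂ (p.1, p.2.1) := by
    filter_upwards [(hassoc.symm MeasurableEquiv.prodAssoc).quasiMeasurePreserving.ae
      (ae_pos_integral_right_of_pos hfAm (fun _ => hf0 _) hfAi)] with p hp hpos
    rw [hf₁₂]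
    exact hp hpos
  have h₂ : ∀ᵐ p ∂μ.prod (ν.prod ρ), 0 < f₁₂ (p.1, p.2.1) → 0 < f₂ p.2.1 := by
    filter_upwards [(quasiMeasurePreserving_fst_snd_fst (μ := μ) (ν := ν) (ρ := ρ)).ae
      (ae_pos_integral_left_of_pos hf₁₂m hf₁₂0 hf₁₂i)] with p hp hpos
    simpa only [hf₂, ← hf₁₂] using hp hpos
  filter_upwards [h₁₂, h₂, ae_pos_integral_left_of_pos hfm hf0 hfi] with p h₁₂ h₂ h₂₃ hp
  exact ⟨h₁₂ hp, h₂ (h₁₂ hp), (hf₂₃ p.2).symm ▸ h₂₃ hp⟩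

end Marginals

lemma integral_nonneg_and_eq_zero_iff_of_ae_le {α : Type*} [MeasurableSpace α] {μ : Measure α}
    {D C : α → ℝ} {P : α → Prop} (hD : Integrable D μ) (hC : Integrable C μ)
    (hC0 : 0 ≤ ∫ x, C x ∂μ) (hCD : C ≤ᵐ[μ] D) (hP : ∀ᵐ x ∂μ, D x = C x → P x)
    (hD0 : ∀ᵐ x ∂μ, P x → D x = 0) :
    0 ≤ ∫ x, D x ∂μ ∧ (∫ x, D x ∂μ = 0 ↔ ∀ᵐ x ∂μ, P x) := by
  have hmono : ∫ x, C x ∂μ ≤ ∫ x, D x ∂μ := integral_mono_ae hC hD hCD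
  refine ⟨hC0.trans hmono, fun h0 => ?_, fun hPx => ?_⟩
  · have hCD_eq : C =ᵐ[μ] D := (integral_eq_iff_of_ae_le hC hD hCD).1 (by linarith)
    filter_upwards [hCD_eq, hP] with x hx h
    exact h hx.symm
  · rw [← integral_zero α ℝ]
    refine integral_congr_ae ?_
    filter_upwards [hPx, hD0] with x hx h
    exact h hx

theorem conditional_weighted_entropy_mono_general
    {X₁ X₂ X₃ : Type*} [MeasurableSpace X₁] [MeasurableSpace X₂] [MeasurableSpace X₃]
    (ν₁ : Measure X₁) (ν₂ : Measure X₂) (ν₃ : Measure X₃)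
    [SigmaFinite ν₁] [SigmaFinite ν₂] [SigmaFinite ν₃]
    (f φ : X₁ × X₂ × X₃ → ℝ)
    (hfm : Measurable f)
    (hf0 : ∀ p, 0 ≤ f p) (hφ0 : ∀ p, 0 ≤ φ p)
    (hfprob : ∫ p, f p ∂(ν₁.prod (ν₂.prod ν₃)) = 1)
    (f₂ : X₂ → ℝ) (hf₂ : ∀ x₂, f₂ x₂ = ∫ x₁, (∫ x₃, f (x₁, x₂, x₃) ∂ν₃) ∂ν₁)
    (f₁₂ : X₁ × X₂ → ℝ) (hf₁₂ : ∀ x₁ x₂, f₁₂ (x₁, x₂) = ∫ x₃, f (x₁, x₂, x₃) ∂ν₃)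
    (f₂₃ : X₂ × X₃ → ℝ) (hf₂₃ : ∀ q, f₂₃ q = ∫ x₁, f (x₁, q) ∂ν₁)
    (hint1 : Integrable (fun p => φ p * f p * log (f p / f₂₃ p.2)) (ν₁.prod (ν₂.prod ν₃)))
    (hint2 : Integrable (fun p => φ p * f p * log (f₁₂ (p.1, p.2.1) / f₂ p.2.1))
        (ν₁.prod (ν₂.prod ν₃)))
    (hint3 : Integrable (fun p => φ p *
        (f p - f₂ p.2.1 * (f₁₂ (p.1, p.2.1) / f₂ p.2.1) * (f₂₃ p.2 / f₂ p.2.1)))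
        (ν₁.prod (ν₂.prod ν₃)))
    (hcond : 0 ≤ ∫ p, φ p *
        (f p - f₂ p.2.1 * (f₁₂ (p.1, p.2.1) / f₂ p.2.1) * (f₂₃ p.2 / f₂ p.2.1))
        ∂(ν₁.prod (ν₂.prod ν₃))) :
    (-∫ p, φ p * f p * log (f p / f₂₃ p.2) ∂(ν₁.prod (ν₂.prod ν₃)))
        ≤ -∫ p, φ p * f p * log (f₁₂ (p.1, p.2.1) / f₂ p.2.1) ∂(ν₁.prod (ν₂.prod ν₃)) ∧
      ((-∫ p, φ p * f p * log (f p / f₂₃ p.2) ∂(ν₁.prod (ν₂.prod ν₃)))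
          = -∫ p, φ p * f p * log (f₁₂ (p.1, p.2.1) / f₂ p.2.1) ∂(ν₁.prod (ν₂.prod ν₃)) ↔
        ∀ᵐ p ∂(ν₁.prod (ν₂.prod ν₃)), 0 < f p →
          φ p * (f p - f₂ p.2.1 * (f₁₂ (p.1, p.2.1) / f₂ p.2.1) * (f₂₃ p.2 / f₂ p.2.1)) = 0) := by
  have hfi : Integrable f (ν₁.prod (ν₂.prod ν₃)) :=
    .of_integral_ne_zero (hfprob ▸ one_ne_zero)
  have hpos := ae_pos_marginals_of_pos hfm hf0 hfi hf₂ hf₁₂ hf₂₃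
  have hf₁₂0 : ∀ x₁ x₂, 0 ≤ f₁₂ (x₁, x₂) :=
    fun x₁ x₂ => (hf₁₂ x₁ x₂).symm ▸ integral_nonneg fun _ => hf0 _
  have hf₂0 : ∀ x₂, 0 ≤ f₂ x₂ :=
    fun x₂ => (hf₂ x₂).symm ▸ integral_nonneg fun _ => integral_nonneg fun _ => hf0 _
  have hf₂₃0 : ∀ q, 0 ≤ f₂₃ q := fun q => (hf₂₃ q).symm ▸ integral_nonneg fun _ => hf0 _
  have key := integral_nonneg_and_eq_zero_iff_of_ae_le (hint1.sub hint2) hint3 hcond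
    (hpos.mono fun p hp => mul_sub_le_mul_log_div_sub (hφ0 p) (hf0 p) (hf₁₂0 _ _) (hf₂0 _)
      (hf₂₃0 _) hp)
    (hpos.mono fun p hp => mul_sub_eq_zero_of_mul_log_div_sub_eq hp)
    (hpos.mono fun p hp => mul_log_div_sub_eq_zero_of_mul_sub_eq_zero (hf0 p) hp)
  simp only [Pi.sub_apply] at key
  rw [integral_sub hint1 hint2, sub_nonneg, sub_eq_zero] at key
  rw [neg_le_neg_iff, neg_inj]
  exact key

/-- **Conditioning reduces conditional weighted entropy.** For a joint probability
density `f` on `X₁ × X₂ × X₃` with marginals `f₂, f₂₃`, pair marginal `f₁₂`,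
conditional densities `f_{1|2} = f₁₂/f₂`, `f_{3|2} = f₂₃/f₂`, `f_{1|23} = f/f₂₃`, if
`∫ φ (f - f₂ f_{1|2} f_{3|2}) ≥ 0` then
`-∫ φ f log f_{1|23} ≤ -∫ φ f log f_{1|2}`, with equality iff, modulo `φ`,
`X₁` and `X₃` are conditionally independent given `X₂`. -/
theorem conditional_weighted_entropy_mono
    {X₁ X₂ X₃ : Type*} [MeasurableSpace X₁] [MeasurableSpace X₂] [MeasurableSpace X₃]
    (ν₁ : Measure X₁) (ν₂ : Measure X₂) (ν₃ : Measure X₃)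
    [SigmaFinite ν₁] [SigmaFinite ν₂] [SigmaFinite ν₃]
    (f φ : X₁ × X₂ × X₃ → ℝ)
    (hfm : Measurable f) (hφm : Measurable φ)
    (hf0 : ∀ p, 0 ≤ f p) (hφ0 : ∀ p, 0 ≤ φ p)
    (hfprob : ∫ p, f p ∂(ν₁.prod (ν₂.prod ν₃)) = 1)
    (f₂ : X₂ → ℝ) (hf₂ : ∀ x₂, f₂ x₂ = ∫ x₁, (∫ x₃, f (x₁, x₂, x₃) ∂ν₃) ∂ν₁)
    (f₁₂ : X₁ × X₂ → ℝ) (hf₁₂ : ∀ x₁ x₂, f₁₂ (x₁, x₂) = ∫ x₃, f (x₁, x₂, x₃) ∂ν₃)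
    (f₂₃ : X₂ × X₃ → ℝ) (hf₂₃ : ∀ q, f₂₃ q = ∫ x₁, f (x₁, q) ∂ν₁)
    (hint1 : Integrable (fun p => φ p * f p * log (f p / f₂₃ p.2)) (ν₁.prod (ν₂.prod ν₃)))
    (hint2 : Integrable (fun p => φ p * f p * log (f₁₂ (p.1, p.2.1) / f₂ p.2.1))
        (ν₁.prod (ν₂.prod ν₃)))
    (hint3 : Integrable (fun p => φ p *
        (f p - f₂ p.2.1 * (f₁₂ (p.1, p.2.1) / f₂ p.2.1) * (f₂₃ p.2 / f₂ p.2.1)))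
        (ν₁.prod (ν₂.prod ν₃)))
    (hcond : 0 ≤ ∫ p, φ p *
        (f p - f₂ p.2.1 * (f₁₂ (p.1, p.2.1) / f₂ p.2.1) * (f₂₃ p.2 / f₂ p.2.1))
        ∂(ν₁.prod (ν₂.prod ν₃))) :
    (-∫ p, φ p * f p * log (f p / f₂₃ p.2) ∂(ν₁.prod (ν₂.prod ν₃)))
        ≤ -∫ p, φ p * f p * log (f₁₂ (p.1, p.2.1) / f₂ p.2.1) ∂(ν₁.prod (ν₂.prod ν₃)) ∧
      ((-∫ p, φ p * f p * log (f p / f₂₃ p.2) ∂(ν₁.prod (ν₂.prod ν₃)))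
          = -∫ p, φ p * f p * log (f₁₂ (p.1, p.2.1) / f₂ p.2.1) ∂(ν₁.prod (ν₂.prod ν₃)) ↔
        ∀ᵐ p ∂(ν₁.prod (ν₂.prod ν₃)), 0 < f p →
          φ p * (f p - f₂ p.2.1 * (f₁₂ (p.1, p.2.1) / f₂ p.2.1) * (f₂₃ p.2 / f₂ p.2.1)) = 0) :=
  conditional_weighted_entropy_mono_general ν₁ ν₂ ν₃ f φ hfm hf0 hφ0 hfprob f₂ hf₂ f₁₂ hf₁₂ f₂₃ hf₂₃
    hint1 hint2 hint3 hcond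
end

section
/- Strong sub-additivity of the weighted entropy: Let f(x₁,x₂,x₃) be a joint probability density on X₁ × X₂ × X₃ with respect to ν₁ ⊗ ν₂ ⊗ ν₃, with marginal f₂ of X₂ and pair marginals f₁₂ of (X₁,X₂) and f₂₃ of (X₂,X₃), and let φ : X₁ × X₂ × X₃ → [0,∞) be a measurable weight function such that all integrals involved converge absolutely. If ∫ φ(x₁,x₂,x₃)·( f(x₁,x₂,x₃) − f₂(x₂)·f_{1|2}(x₁|x₂)·f_{3|2}(x₃|x₂) ) dν₁dν₂dν₃ ≥ 0 (where f_{1|2} = f₁₂/f₂, f_{3|2} = f₂₃/f₂), then −∫ φ·f·log f dν₁dν₂dν₃ − ∫ φ·f·log f₂(x₂) dν₁dν₂dν₃ ≤ −∫ φ·f·log f₁₂(x₁,x₂) dν₁dν₂dν₃ − ∫ φ·f·log f₂₃(x₂,x₃) dν₁dν₂dν₃. Equality holds if and only if, modulo φ, X₁ and X₃ are conditionally independent given X₂. -/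
open MeasureTheory Real

lemma wesa_measurableSet_imp {α} [MeasurableSpace α] {p q : α → Prop}
    (hp : MeasurableSet {x | p x}) (hq : MeasurableSet {x | q x}) :
    MeasurableSet {x | p x → q x} := by
  have : {x | p x → q x} = {x | p x}ᶜ ∪ {x | q x} := Set.ext fun x => imp_iff_not_or
  rw [this]; exact hp.compl.union hq

lemma wesa_pointwise (Φ F a b c : ℝ) (hΦ : 0 ≤ Φ) (hF : 0 ≤ F) (ha : 0 ≤ a) (hb : 0 ≤ b)
    (hc : 0 ≤ c) (hpos : 0 < F → 0 < a ∧ 0 < b ∧ 0 < c) :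
    Φ * F * log a + Φ * F * log b - Φ * F * log F - Φ * F * log c ≤
      Φ * (c * (a / c) * (b / c) - F) ∧
    (Φ * F * log a + Φ * F * log b - Φ * F * log F - Φ * F * log c =
        Φ * (c * (a / c) * (b / c) - F) →
      0 < F → Φ * (F - c * (a / c) * (b / c)) = 0) ∧
    ((0 < F → Φ * (F - c * (a / c) * (b / c)) = 0) →
      Φ * F * log a + Φ * F * log b - Φ * F * log F - Φ * F * log c = 0) := by
  rcases eq_or_lt_of_le hF with hF0 | hF0
  · refine ⟨?_, ?_, ?_⟩
    · have hg0 : 0 ≤ c * (a / c) * (b / c) :=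
        mul_nonneg (mul_nonneg hc (div_nonneg ha hc)) (div_nonneg hb hc)
      have h1 : 0 ≤ Φ * (c * (a / c) * (b / c) - 0) := by
        rw [sub_zero]; exact mul_nonneg hΦ hg0
      simpa [← hF0] using h1
    · intro _ h; exact absurd h (by simp [← hF0])
    · intro _; simp [← hF0]
  · obtain ⟨ha0, hb0, hc0⟩ := hpos hF0
    have hGeq : c * (a / c) * (b / c) = a * b / c := by field_simp
    have hG0 : 0 < a * b / c := by positivity
    have hlogsum : log a + log b - log F - log c = log (a * b / c / F) := by
      rw [Real.log_div (by positivity) hF0.ne', Real.log_div (by positivity) hc0.ne',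
        Real.log_mul ha0.ne' hb0.ne']
      ring
    have hteq : Φ * F * log a + Φ * F * log b - Φ * F * log F - Φ * F * log c =
        Φ * F * log (a * b / c / F) := by rw [← hlogsum]; ring
    have hueq : Φ * (c * (a / c) * (b / c) - F) = Φ * F * (a * b / c / F - 1) := by
      rw [hGeq]; field_simp
    refine ⟨?_, ?_, ?_⟩
    · rw [hteq, hueq]
      exact mul_le_mul_of_nonneg_left (Real.log_le_sub_one_of_pos (div_pos hG0 hF0))
        (mul_nonneg hΦ hF)
    · intro heq _
      rw [hteq, hueq] at heq
      rcases eq_or_lt_of_le hΦ with hΦ0 | hΦ0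
      · simp [← hΦ0]
      · have hx : log (a * b / c / F) = a * b / c / F - 1 :=
          mul_left_cancel₀ (mul_pos hΦ0 hF0).ne' heq
        have h1 : a * b / c / F = 1 := by
          by_contra hne
          exact absurd hx (ne_of_lt (Real.log_lt_sub_one_of_pos (div_pos hG0 hF0) hne))
        have h2 : a * b / c = F := (div_eq_one_iff_eq hF0.ne').1 h1
        rw [hGeq, h2]; ring
    · intro h
      have h' := h hF0
      rcases mul_eq_zero.1 h' with hΦ0 | hFG
      · simp [hΦ0]
      · have h2 : a * b / c = F := by rw [hGeq] at hFG; linarith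
        rw [hteq, h2, div_self hF0.ne', Real.log_one, mul_zero]

/-- **Strong sub-additivity of the weighted entropy.** For a joint probability density
`f` on `X₁ × X₂ × X₃` with marginal `f₂` and pair marginals `f₁₂, f₂₃`, if
`∫ φ (f - f₂ f_{1|2} f_{3|2}) ≥ 0` then
`-∫ φ f log f - ∫ φ f log f₂ ≤ -∫ φ f log f₁₂ - ∫ φ f log f₂₃`, with equality iff,
modulo `φ`, `X₁` and `X₃` are conditionally independent given `X₂`. -/
theorem weighted_entropy_strong_subadditive
    {X₁ X₂ X₃ : Type*} [MeasurableSpace X₁] [MeasurableSpace X₂] [MeasurableSpace X₃]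
    (ν₁ : Measure X₁) (ν₂ : Measure X₂) (ν₃ : Measure X₃)
    [SigmaFinite ν₁] [SigmaFinite ν₂] [SigmaFinite ν₃]
    (f φ : X₁ × X₂ × X₃ → ℝ)
    (hfm : Measurable f) (hφm : Measurable φ)
    (hf0 : ∀ p, 0 ≤ f p) (hφ0 : ∀ p, 0 ≤ φ p)
    (hfprob : ∫ p, f p ∂(ν₁.prod (ν₂.prod ν₃)) = 1)
    (f₂ : X₂ → ℝ) (hf₂ : ∀ x₂, f₂ x₂ = ∫ x₁, (∫ x₃, f (x₁, x₂, x₃) ∂ν₃) ∂ν₁)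
    (f₁₂ : X₁ × X₂ → ℝ) (hf₁₂ : ∀ x₁ x₂, f₁₂ (x₁, x₂) = ∫ x₃, f (x₁, x₂, x₃) ∂ν₃)
    (f₂₃ : X₂ × X₃ → ℝ) (hf₂₃ : ∀ q, f₂₃ q = ∫ x₁, f (x₁, q) ∂ν₁)
    (hint1 : Integrable (fun p => φ p * f p * log (f p)) (ν₁.prod (ν₂.prod ν₃)))
    (hint2 : Integrable (fun p => φ p * f p * log (f₂ p.2.1)) (ν₁.prod (ν₂.prod ν₃)))
    (hint3 : Integrable (fun p => φ p * f p * log (f₁₂ (p.1, p.2.1))) (ν₁.prod (ν₂.prod ν₃)))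
    (hint4 : Integrable (fun p => φ p * f p * log (f₂₃ p.2)) (ν₁.prod (ν₂.prod ν₃)))
    (hint5 : Integrable (fun p => φ p *
        (f p - f₂ p.2.1 * (f₁₂ (p.1, p.2.1) / f₂ p.2.1) * (f₂₃ p.2 / f₂ p.2.1)))
        (ν₁.prod (ν₂.prod ν₃)))
    (hcond : 0 ≤ ∫ p, φ p *
        (f p - f₂ p.2.1 * (f₁₂ (p.1, p.2.1) / f₂ p.2.1) * (f₂₃ p.2 / f₂ p.2.1))
        ∂(ν₁.prod (ν₂.prod ν₃))) :
    ((-∫ p, φ p * f p * log (f p) ∂(ν₁.prod (ν₂.prod ν₃)))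
        - ∫ p, φ p * f p * log (f₂ p.2.1) ∂(ν₁.prod (ν₂.prod ν₃)))
      ≤ ((-∫ p, φ p * f p * log (f₁₂ (p.1, p.2.1)) ∂(ν₁.prod (ν₂.prod ν₃)))
        - ∫ p, φ p * f p * log (f₂₃ p.2) ∂(ν₁.prod (ν₂.prod ν₃))) ∧
      (((-∫ p, φ p * f p * log (f p) ∂(ν₁.prod (ν₂.prod ν₃)))
          - ∫ p, φ p * f p * log (f₂ p.2.1) ∂(ν₁.prod (ν₂.prod ν₃)))
        = ((-∫ p, φ p * f p * log (f₁₂ (p.1, p.2.1)) ∂(ν₁.prod (ν₂.prod ν₃)))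
          - ∫ p, φ p * f p * log (f₂₃ p.2) ∂(ν₁.prod (ν₂.prod ν₃))) ↔
        ∀ᵐ p ∂(ν₁.prod (ν₂.prod ν₃)), 0 < f p →
          φ p * (f p - f₂ p.2.1 * (f₁₂ (p.1, p.2.1) / f₂ p.2.1) * (f₂₃ p.2 / f₂ p.2.1)) = 0) := by
  set μ := ν₁.prod (ν₂.prod ν₃) with hμ
  -- f is integrable
  have hfint : Integrable f μ := by
    by_contra h
    rw [integral_undef h] at hfprob
    norm_num at hfprob
  -- measurability of the marginals
  have hf₁₂m : Measurable f₁₂ := by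
    have h1 : Measurable (fun z : (X₁ × X₂) × X₃ => f (z.1.1, z.1.2, z.2)) :=
      hfm.comp ((measurable_fst.fst).prodMk ((measurable_fst.snd).prodMk measurable_snd))
    have h2 := (h1.stronglyMeasurable.integral_prod_right' (ν := ν₃)).measurable
    have he : f₁₂ = fun q : X₁ × X₂ => ∫ x₃, f (q.1, q.2, x₃) ∂ν₃ :=
      funext fun q => hf₁₂ q.1 q.2
    rw [he]; exact h2
  have hf₂₃m : Measurable f₂₃ := by
    have h2 := (hfm.stronglyMeasurable.integral_prod_left' (μ := ν₁)).measurable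
    have he : f₂₃ = fun q => ∫ x₁, f (x₁, q) ∂ν₁ := funext hf₂₃
    rw [he]; exact h2
  have hf₂m : Measurable f₂ := by
    have h2 := (hf₁₂m.stronglyMeasurable.integral_prod_left' (μ := ν₁)).measurable
    have he : f₂ = fun x₂ => ∫ x₁, f₁₂ (x₁, x₂) ∂ν₁ := by
      funext x₂; rw [hf₂ x₂]; simp only [hf₁₂]
    rw [he]; exact h2
  -- nonnegativity of the marginals
  have hf₁₂0 : ∀ q : X₁ × X₂, 0 ≤ f₁₂ q := by
    intro q
    have : (0:ℝ) ≤ f₁₂ (q.1, q.2) := by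
      rw [hf₁₂]; exact integral_nonneg fun _ => hf0 _
    exact this
  have hf₂₃0 : ∀ q, 0 ≤ f₂₃ q := fun q => by
    rw [hf₂₃]; exact integral_nonneg fun _ => hf0 _
  have hf₂0 : ∀ x₂, 0 ≤ f₂ x₂ := fun x₂ => by
    rw [hf₂]; exact integral_nonneg fun _ => integral_nonneg fun _ => hf0 _
  -- integrability of f₁₂
  have hassoc : Integrable (fun z : (X₁ × X₂) × X₃ => f (z.1.1, z.1.2, z.2))
      ((ν₁.prod ν₂).prod ν₃) := by
    have h1 : Integrable f (Measure.map (MeasurableEquiv.prodAssoc) ((ν₁.prod ν₂).prod ν₃)) := by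
      rw [Measure.prodAssoc_prod]; exact hfint
    exact (integrable_map_equiv _ _).1 h1
  have hf₁₂int : Integrable f₁₂ (ν₁.prod ν₂) := by
    have h2 := hassoc.integral_prod_left
    have he : f₁₂ = fun z : X₁ × X₂ => ∫ x₃, f (z.1, z.2, x₃) ∂ν₃ :=
      funext fun z => hf₁₂ z.1 z.2
    rw [he]; exact h2
  -- a.e. positivity of f₁₂ on {f > 0}
  have h12 : ∀ᵐ p ∂μ, 0 < f p → 0 < f₁₂ (p.1, p.2.1) := by
    have hmeas1 : MeasurableSet {p : X₁ × X₂ × X₃ | 0 < f p → 0 < f₁₂ (p.1, p.2.1)} :=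
      wesa_measurableSet_imp (measurableSet_lt measurable_const hfm)
        (measurableSet_lt measurable_const
          (hf₁₂m.comp (measurable_fst.prodMk measurable_snd.fst)))
    rw [hμ, Measure.ae_prod_iff_ae_ae hmeas1]
    filter_upwards [hfint.prod_right_ae] with x₁ hx₁
    have hmeas2 : MeasurableSet {q : X₂ × X₃ | 0 < f (x₁, q) → 0 < f₁₂ (x₁, q.1)} :=
      wesa_measurableSet_imp
        (measurableSet_lt measurable_const (hfm.comp (measurable_const.prodMk measurable_id)))
        (measurableSet_lt measurable_const
          (hf₁₂m.comp (measurable_const.prodMk measurable_fst)))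
    rw [Measure.ae_prod_iff_ae_ae hmeas2]
    filter_upwards [hx₁.prod_right_ae] with x₂ hx₂
    rcases (hf₁₂0 (x₁, x₂)).lt_or_eq with h | h
    · filter_upwards with x₃ _; exact h
    · have h0 : ∫ x₃, f (x₁, x₂, x₃) ∂ν₃ = 0 := by rw [← hf₁₂ x₁ x₂, ← h]
      have hz := (integral_eq_zero_iff_of_nonneg (fun x₃ => hf0 _) hx₂).1 h0
      filter_upwards [hz] with x₃ h3
      intro hlt; exact absurd hlt (by simp [h3])
  -- a.e. positivity of f₂₃ on {f > 0}
  have h23 : ∀ᵐ p ∂μ, 0 < f p → 0 < f₂₃ p.2 := by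
    have hmeasw : MeasurableSet {w : (X₂ × X₃) × X₁ | 0 < f (w.2, w.1) → 0 < f₂₃ w.1} :=
      wesa_measurableSet_imp
        (measurableSet_lt measurable_const (hfm.comp (measurable_snd.prodMk measurable_fst)))
        (measurableSet_lt measurable_const (hf₂₃m.comp measurable_fst))
    have hae : ∀ᵐ w ∂(ν₂.prod ν₃).prod ν₁, 0 < f (w.2, w.1) → 0 < f₂₃ w.1 := by
      rw [Measure.ae_prod_iff_ae_ae hmeasw]
      filter_upwards [hfint.prod_left_ae] with q hq
      rcases (hf₂₃0 q).lt_or_eq with h | h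
      · filter_upwards with x₁ _; exact h
      · have h0 : ∫ x₁, f (x₁, q) ∂ν₁ = 0 := by rw [← hf₂₃ q, ← h]
        have hz := (integral_eq_zero_iff_of_nonneg (fun x₁ => hf0 _) hq).1 h0
        filter_upwards [hz] with x₁ h3
        intro hlt; exact absurd hlt (by simp [h3])
    have hsw := (Measure.measurePreserving_swap (μ := ν₁) (ν := ν₂.prod ν₃)).quasiMeasurePreserving.ae hae
    exact hsw
  -- a.e. positivity of f₂ on {f₁₂ > 0}
  have h2pos : ∀ᵐ p ∂μ, 0 < f₁₂ (p.1, p.2.1) → 0 < f₂ p.2.1 := by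
    have inner : ∀ᵐ x₂ ∂ν₂, ∀ᵐ x₁ ∂ν₁, (0 < f₁₂ (x₁, x₂) → 0 < f₂ x₂) := by
      filter_upwards [hf₁₂int.prod_left_ae] with x₂ hx₂
      rcases (hf₂0 x₂).lt_or_eq with h | h
      · filter_upwards with x₁ _; exact h
      · have h0 : ∫ x₁, f₁₂ (x₁, x₂) ∂ν₁ = 0 := by
          simp only [hf₁₂]; rw [← hf₂ x₂, ← h]
        have hz := (integral_eq_zero_iff_of_nonneg (fun x₁ => hf₁₂0 _) hx₂).1 h0
        filter_upwards [hz] with x₁ h3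
        intro hlt; exact absurd hlt (by simp [h3])
    have hset : MeasurableSet {w : X₂ × X₁ | 0 < f₁₂ (w.2, w.1) → 0 < f₂ w.1} :=
      wesa_measurableSet_imp
        (measurableSet_lt measurable_const (hf₁₂m.comp (measurable_snd.prodMk measurable_fst)))
        (measurableSet_lt measurable_const (hf₂m.comp measurable_fst))
    have hsw : ∀ᵐ z ∂ν₁.prod ν₂, 0 < f₁₂ z → 0 < f₂ z.2 := by
      have h1 : ∀ᵐ w ∂ν₂.prod ν₁, 0 < f₁₂ (w.2, w.1) → 0 < f₂ w.1 := by
        rw [Measure.ae_prod_iff_ae_ae hset]; exact inner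
      exact (Measure.measurePreserving_swap (μ := ν₁) (ν := ν₂)).quasiMeasurePreserving.ae h1
    have h3' := Measure.ae_ae_of_ae_prod hsw
    have hsetμ : MeasurableSet {p : X₁ × X₂ × X₃ | 0 < f₁₂ (p.1, p.2.1) → 0 < f₂ p.2.1} :=
      wesa_measurableSet_imp
        (measurableSet_lt measurable_const
          (hf₁₂m.comp (measurable_fst.prodMk measurable_snd.fst)))
        (measurableSet_lt measurable_const (hf₂m.comp measurable_snd.fst))
    rw [hμ, Measure.ae_prod_iff_ae_ae hsetμ]
    filter_upwards [h3'] with x₁ hx₁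
    exact Measure.quasiMeasurePreserving_fst.ae hx₁
  have hpos : ∀ᵐ p ∂μ, 0 < f p → 0 < f₁₂ (p.1, p.2.1) ∧ 0 < f₂₃ p.2 ∧ 0 < f₂ p.2.1 := by
    filter_upwards [h12, h23, h2pos] with p e1 e2 e3 hf
    exact ⟨e1 hf, e2 hf, e3 (e1 hf)⟩
  -- pointwise comparison
  have hkey : ∀ᵐ p ∂μ,
      (φ p * f p * log (f₁₂ (p.1, p.2.1)) + φ p * f p * log (f₂₃ p.2)
          - φ p * f p * log (f p) - φ p * f p * log (f₂ p.2.1) ≤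
        φ p * (f₂ p.2.1 * (f₁₂ (p.1, p.2.1) / f₂ p.2.1) * (f₂₃ p.2 / f₂ p.2.1) - f p)) ∧
      (φ p * f p * log (f₁₂ (p.1, p.2.1)) + φ p * f p * log (f₂₃ p.2)
          - φ p * f p * log (f p) - φ p * f p * log (f₂ p.2.1) =
          φ p * (f₂ p.2.1 * (f₁₂ (p.1, p.2.1) / f₂ p.2.1) * (f₂₃ p.2 / f₂ p.2.1) - f p) →
        0 < f p →
        φ p * (f p - f₂ p.2.1 * (f₁₂ (p.1, p.2.1) / f₂ p.2.1) * (f₂₃ p.2 / f₂ p.2.1)) = 0) ∧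
      ((0 < f p →
          φ p * (f p - f₂ p.2.1 * (f₁₂ (p.1, p.2.1) / f₂ p.2.1) * (f₂₃ p.2 / f₂ p.2.1)) = 0) →
        φ p * f p * log (f₁₂ (p.1, p.2.1)) + φ p * f p * log (f₂₃ p.2)
          - φ p * f p * log (f p) - φ p * f p * log (f₂ p.2.1) = 0) :=
    hpos.mono fun p hp =>
      wesa_pointwise (φ p) (f p) (f₁₂ (p.1, p.2.1)) (f₂₃ p.2) (f₂ p.2.1)
        (hφ0 p) (hf0 p) (hf₁₂0 _) (hf₂₃0 _) (hf₂0 _) hp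
  -- the two comparison functions
  set T : X₁ × X₂ × X₃ → ℝ := fun p =>
    φ p * f p * log (f₁₂ (p.1, p.2.1)) + φ p * f p * log (f₂₃ p.2)
      - φ p * f p * log (f p) - φ p * f p * log (f₂ p.2.1) with hT
  set U : X₁ × X₂ × X₃ → ℝ := fun p =>
    φ p * (f₂ p.2.1 * (f₁₂ (p.1, p.2.1) / f₂ p.2.1) * (f₂₃ p.2 / f₂ p.2.1) - f p) with hU
  have hTint : Integrable T μ := ((hint3.add hint4).sub hint1).sub hint2
  have hUeq : U = fun p => -(φ p *
      (f p - f₂ p.2.1 * (f₁₂ (p.1, p.2.1) / f₂ p.2.1) * (f₂₃ p.2 / f₂ p.2.1))) := by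
    funext p; rw [hU]; ring
  have hUint : Integrable U μ := by rw [hUeq]; exact hint5.neg
  have hUle : ∫ p, U p ∂μ ≤ 0 := by
    rw [hUeq, integral_neg]
    exact neg_nonpos_of_nonneg hcond
  have hTleU : ∫ p, T p ∂μ ≤ ∫ p, U p ∂μ :=
    integral_mono_ae hTint hUint (hkey.mono fun p hp => hp.1)
  have hTval : ∫ p, T p ∂μ = (∫ p, φ p * f p * log (f₁₂ (p.1, p.2.1)) ∂μ)
      + (∫ p, φ p * f p * log (f₂₃ p.2) ∂μ) - (∫ p, φ p * f p * log (f p) ∂μ)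
      - (∫ p, φ p * f p * log (f₂ p.2.1) ∂μ) := by
    have hintE : Integrable (fun p => φ p * f p * log (f₁₂ (p.1, p.2.1))
        + φ p * f p * log (f₂₃ p.2)) μ := hint3.add hint4
    have hintE2 : Integrable (fun p => φ p * f p * log (f₁₂ (p.1, p.2.1))
        + φ p * f p * log (f₂₃ p.2) - φ p * f p * log (f p)) μ := hintE.sub hint1
    simp only [hT]
    rw [integral_sub hintE2 hint2, integral_sub hintE hint1, integral_add hint3 hint4]
  refine ⟨by linarith, ?_, ?_⟩
  · intro heq
    have hT0 : ∫ p, T p ∂μ = 0 := by linarith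
    have hU0 : ∫ p, U p ∂μ = 0 := le_antisymm hUle (hT0 ▸ hTleU)
    have hnn : 0 ≤ᵐ[μ] fun p => U p - T p := hkey.mono fun p hp => sub_nonneg.2 hp.1
    have hzero : ∫ p, (U p - T p) ∂μ = 0 := by
      rw [integral_sub hUint hTint, hU0, hT0, sub_zero]
    have hUT := (integral_eq_zero_iff_of_nonneg_ae hnn (hUint.sub hTint)).1 hzero
    filter_upwards [hUT, hkey] with p h1 h2
    intro hfp
    have hTU : T p = U p := by
      have : U p - T p = 0 := h1
      linarith
    exact h2.2.1 hTU hfp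
  · intro hce
    have hT0ae : T =ᵐ[μ] 0 := by
      filter_upwards [hkey, hce] with p h1 h2
      exact h1.2.2 h2
    have hT0 : ∫ p, T p ∂μ = 0 := integral_eq_zero_of_ae hT0ae
    linarith
end

section
/- Data-processing inequality for mutual weighted entropy: Let f(x₁,x₂,x₃) be a joint probability density on X₁ × X₂ × X₃ with respect to ν₁ ⊗ ν₂ ⊗ ν₃ and φ : X₁ × X₂ × X₃ → [0,∞) a measurable weight function such that all integrals involved converge absolutely. Assume the Markov property modulo φ: φ(x₁,x₂,x₃)·( f(x₁,x₂,x₃) − f₂(x₂)·f_{1|2}(x₁|x₂)·f_{3|2}(x₃|x₂) ) = 0 for f-almost all (x₁,x₂,x₃). If in addition ∫ φ(x₁,x₂,x₃)·( f(x₁,x₂,x₃) − f₃(x₃)·f_{1|3}(x₁|x₃)·f_{2|3}(x₂|x₃) ) dν₁dν₂dν₃ ≥ 0, then ∫ φ·f·log( f₁₃(x₁,x₃)/(f₁(x₁)·f₃(x₃)) ) dν₁dν₂dν₃ ≤ ∫ φ·f·log( f₁₂(x₁,x₂)/(f₁(x₁)·f₂(x₂)) ) dν₁dν₂dν₃ (i.e.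 i^w_{ψ₁₃}(X₁:X₃) ≤ i^w_{ψ₁₂}(X₁:X₂)), with equality if and only if, modulo φ, X₁ and X₂ are conditionally independent given X₃. -/
open MeasureTheory Real

section Aux

/-- If a nonnegative integrable function is positive at a point, then (a.e.) its marginal over
the second coordinate is positive at the first coordinate. -/
lemma marg_snd {α β : Type*} [MeasurableSpace α] [MeasurableSpace β]
    (μa : Measure α) (μb : Measure β) [SigmaFinite μa] [SigmaFinite μb]
    {g : α × β → ℝ} (hm : Measurable g) (h0 : ∀ x, 0 ≤ g x)
    (hi : Integrable g (μa.prod μb)) :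
    ∀ᵐ x ∂μa.prod μb, 0 < g x → 0 < ∫ b, g (x.1, b) ∂μb := by
  set G : α → ℝ := fun a => ∫ b, g (a, b) ∂μb with hG
  have hGm : Measurable G := hm.stronglyMeasurable.integral_prod_right'.measurable
  have hSm : MeasurableSet {x : α × β | 0 < g x ∧ G x.1 ≤ 0} := by
    refine (measurableSet_lt measurable_const hm).inter ?_
    exact measurableSet_le (hGm.comp measurable_fst) measurable_const
  have key : (μa.prod μb) {x : α × β | 0 < g x ∧ G x.1 ≤ 0} = 0 := by
    rw [Measure.prod_apply hSm]
    have hae : ∀ᵐ a ∂μa,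
        μb (Prod.mk a ⁻¹' {x : α × β | 0 < g x ∧ G x.1 ≤ 0}) = 0 := by
      filter_upwards [hi.prod_right_ae] with a ha
      by_cases hGa : G a ≤ 0
      · have hGa0 : G a = 0 := le_antisymm hGa (integral_nonneg fun b => h0 _)
        have hz : (fun b => g (a, b)) =ᵐ[μb] 0 :=
          (integral_eq_zero_iff_of_nonneg (fun b => h0 _) ha).mp hGa0
        have hzn : μb {b | g (a, b) ≠ 0} = 0 := by
          have h' := hz
          rw [Filter.EventuallyEq, ae_iff] at h'
          simpa using h'
        refine measure_mono_null (fun b hb => ?_) hzn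
        exact ne_of_gt hb.1
      · have hempty : Prod.mk a ⁻¹' {x : α × β | 0 < g x ∧ G x.1 ≤ 0} = ∅ := by
          ext b
          simp only [Set.mem_preimage, Set.mem_setOf_eq, Set.mem_empty_iff_false,
            iff_false, not_and]
          exact fun _ => hGa
        simp [hempty]
    rw [lintegral_congr_ae hae, lintegral_zero]
  rw [ae_iff]
  have hset : {x : α × β | ¬(0 < g x → 0 < G x.1)} = {x : α × β | 0 < g x ∧ G x.1 ≤ 0} := by
    ext x
    simp only [Set.mem_setOf_eq]
    rw [Classical.not_imp, not_lt]
  rw [hset]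
  exact key

/-- If a nonnegative integrable function is positive at a point, then (a.e.) its marginal over
the first coordinate is positive at the second coordinate. -/
lemma marg_fst {α β : Type*} [MeasurableSpace α] [MeasurableSpace β]
    (μa : Measure α) (μb : Measure β) [SigmaFinite μa] [SigmaFinite μb]
    {g : α × β → ℝ} (hm : Measurable g) (h0 : ∀ x, 0 ≤ g x)
    (hi : Integrable g (μa.prod μb)) :
    ∀ᵐ x ∂μa.prod μb, 0 < g x → 0 < ∫ a, g (a, x.2) ∂μa := by
  have h := marg_snd μb μa (g := g ∘ Prod.swap) (hm.comp measurable_swap)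
    (fun x => h0 _) hi.swap
  have h' := (Measure.measurePreserving_swap (μ := μa) (ν := μb)).quasiMeasurePreserving.ae h
  filter_upwards [h'] with x hx hgx
  exact hx hgx

/-- Pointwise arithmetic core of the data-processing inequality. -/
lemma key_point {a b c₁ c₂ c₃ d₁₂ d₁₃ d₂₃ : ℝ}
    (ha : 0 ≤ a) (hb : 0 ≤ b) (hc₂ : 0 ≤ c₂) (hc₃ : 0 ≤ c₃)
    (hd₁₂ : 0 ≤ d₁₂) (hd₁₃ : 0 ≤ d₁₃) (hd₂₃ : 0 ≤ d₂₃)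
    (hM : 0 < b → a * (b - c₂ * (d₁₂ / c₂) * (d₂₃ / c₂)) = 0)
    (h1 : 0 < b → 0 < c₁) (h3 : 0 < b → 0 < c₃) (h13 : 0 < b → 0 < d₁₃) :
    (a * b * log (d₁₃ / (c₁ * c₃)) - a * b * log (d₁₂ / (c₁ * c₂))
        ≤ -(a * (b - c₃ * (d₁₃ / c₃) * (d₂₃ / c₃)))) ∧
      (0 < b → a * b * log (d₁₃ / (c₁ * c₃)) - a * b * log (d₁₂ / (c₁ * c₂))
          = -(a * (b - c₃ * (d₁₃ / c₃) * (d₂₃ / c₃)))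
        → a * (b - c₃ * (d₁₃ / c₃) * (d₂₃ / c₃)) = 0) ∧
      (0 < b → a * (b - c₃ * (d₁₃ / c₃) * (d₂₃ / c₃)) = 0
        → a * b * log (d₁₃ / (c₁ * c₃)) - a * b * log (d₁₂ / (c₁ * c₂)) = 0) := by
  rcases ha.eq_or_lt with ha0 | hap
  · refine ⟨?_, ?_, ?_⟩ <;> simp [← ha0]
  rcases hb.eq_or_lt with hb0 | hbp
  · have hb'' : ¬ (0 : ℝ) < b := by rw [← hb0]; exact lt_irrefl 0
    refine ⟨?_, fun h => absurd h hb'', fun h => absurd h hb''⟩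
    rw [← hb0]
    have hZ : 0 ≤ c₃ * (d₁₃ / c₃) * (d₂₃ / c₃) := by positivity
    nlinarith [mul_nonneg ha hZ]
  · have hc₁p := h1 hbp
    have hc₃p := h3 hbp
    have hd₁₃p := h13 hbp
    have hM' := hM hbp
    have hbodyM : b = c₂ * (d₁₂ / c₂) * (d₂₃ / c₂) := by
      rcases mul_eq_zero.mp hM' with h | h
      · exact absurd h (ne_of_gt hap)
      · linarith [sub_eq_zero.mp h]
    have hc₂p : 0 < c₂ := by
      rcases hc₂.eq_or_lt with h | h
      · rw [← h] at hbodyM; simp at hbodyM; linarith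
      · exact h
    have hb' : b = d₁₂ * d₂₃ / c₂ := by
      rw [hbodyM]; field_simp
    have hd₁₂p : 0 < d₁₂ := by
      rcases hd₁₂.eq_or_lt with h | h
      · rw [← h] at hb'; simp at hb'; linarith
      · exact h
    have hd₂₃p : 0 < d₂₃ := by
      rcases hd₂₃.eq_or_lt with h | h
      · rw [← h] at hb'; simp at hb'; linarith
      · exact h
    set t := c₂ * d₁₃ / (c₃ * d₁₂) with ht
    have htp : 0 < t := by positivity
    have hargpos : 0 < d₁₂ / (c₁ * c₂) := by positivity
    have harg13 : d₁₃ / (c₁ * c₃) = t * (d₁₂ / (c₁ * c₂)) := by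
      rw [ht]; field_simp
    have hlog : log (d₁₃ / (c₁ * c₃)) = log t + log (d₁₂ / (c₁ * c₂)) := by
      rw [harg13, Real.log_mul (ne_of_gt htp) (ne_of_gt hargpos)]
    have hbt : b * t = d₁₃ * d₂₃ / c₃ := by
      rw [hb', ht]; field_simp
    have hX : c₃ * (d₁₃ / c₃) * (d₂₃ / c₃) = d₁₃ * d₂₃ / c₃ := by
      field_simp
    have hRHS : -(a * (b - c₃ * (d₁₃ / c₃) * (d₂₃ / c₃))) = a * b * (t - 1) := by
      rw [hX, ← hbt]; ring
    have hLHS : a * b * log (d₁₃ / (c₁ * c₃)) - a * b * log (d₁₂ / (c₁ * c₂))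
        = a * b * log t := by
      rw [hlog]; ring
    refine ⟨?_, ?_, ?_⟩
    · rw [hLHS, hRHS]
      exact mul_le_mul_of_nonneg_left (Real.log_le_sub_one_of_pos htp) (by positivity)
    · intro _ heq
      rw [hLHS, hRHS] at heq
      have hab : (0:ℝ) < a * b := by positivity
      have hlt : log t = t - 1 := mul_left_cancel₀ (ne_of_gt hab) heq
      have ht1 : t = 1 := by
        by_contra hne
        exact absurd hlt (ne_of_lt (Real.log_lt_sub_one_of_pos htp hne))
      rw [hX, ← hbt, ht1]; ring
    · intro _ hzero
      rw [hX] at hzero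
      have hbeq : b = d₁₃ * d₂₃ / c₃ := by
        rcases mul_eq_zero.mp hzero with h | h
        · exact absurd h (ne_of_gt hap)
        · linarith [sub_eq_zero.mp h]
      have e13 : d₁₃ = b * c₃ / d₂₃ := by
        rw [eq_div_iff (ne_of_gt hd₂₃p), hbeq]
        field_simp
      have e12 : d₁₂ = b * c₂ / d₂₃ := by
        rw [eq_div_iff (ne_of_gt hd₂₃p), hb']
        field_simp
      have hdd : d₁₃ / (c₁ * c₃) = d₁₂ / (c₁ * c₂) := by
        rw [e13, e12]
        field_simp
      rw [hdd]; ring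

end Aux

/-- **Data-processing inequality for mutual weighted entropy.** For a triple with joint
density `f`, assuming the Markov property modulo `φ`
(`φ (f - f₂ f_{1|2} f_{3|2}) = 0` `f`-a.e.) and
`∫ φ (f - f₃ f_{1|3} f_{2|3}) ≥ 0`, one has
`∫ φ f log (f₁₃/(f₁ f₃)) ≤ ∫ φ f log (f₁₂/(f₁ f₂))`, with equality iff, modulo `φ`,
`X₁` and `X₂` are conditionally independent given `X₃`. -/
theorem mutual_weighted_entropy_data_processing
    {X₁ X₂ X₃ : Type*} [MeasurableSpace X₁] [MeasurableSpace X₂] [MeasurableSpace X₃]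
    (ν₁ : Measure X₁) (ν₂ : Measure X₂) (ν₃ : Measure X₃)
    [SigmaFinite ν₁] [SigmaFinite ν₂] [SigmaFinite ν₃]
    (f φ : X₁ × X₂ × X₃ → ℝ)
    (hfm : Measurable f) (hφm : Measurable φ)
    (hf0 : ∀ p, 0 ≤ f p) (hφ0 : ∀ p, 0 ≤ φ p)
    (hfprob : ∫ p, f p ∂(ν₁.prod (ν₂.prod ν₃)) = 1)
    (f₁ : X₁ → ℝ) (hf₁ : ∀ x₁, f₁ x₁ = ∫ q, f (x₁, q) ∂(ν₂.prod ν₃))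
    (f₂ : X₂ → ℝ) (hf₂ : ∀ x₂, f₂ x₂ = ∫ x₁, (∫ x₃, f (x₁, x₂, x₃) ∂ν₃) ∂ν₁)
    (f₃ : X₃ → ℝ) (hf₃ : ∀ x₃, f₃ x₃ = ∫ x₁, (∫ x₂, f (x₁, x₂, x₃) ∂ν₂) ∂ν₁)
    (f₁₂ : X₁ × X₂ → ℝ) (hf₁₂ : ∀ x₁ x₂, f₁₂ (x₁, x₂) = ∫ x₃, f (x₁, x₂, x₃) ∂ν₃)
    (f₁₃ : X₁ × X₃ → ℝ) (hf₁₃ : ∀ x₁ x₃, f₁₃ (x₁, x₃) = ∫ x₂, f (x₁, x₂, x₃) ∂ν₂)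
    (f₂₃ : X₂ × X₃ → ℝ) (hf₂₃ : ∀ q, f₂₃ q = ∫ x₁, f (x₁, q) ∂ν₁)
    (hMarkov : ∀ᵐ p ∂(ν₁.prod (ν₂.prod ν₃)), 0 < f p →
        φ p * (f p - f₂ p.2.1 * (f₁₂ (p.1, p.2.1) / f₂ p.2.1) * (f₂₃ p.2 / f₂ p.2.1)) = 0)
    (hint1 : Integrable
        (fun p => φ p * f p * log (f₁₃ (p.1, p.2.2) / (f₁ p.1 * f₃ p.2.2)))
        (ν₁.prod (ν₂.prod ν₃)))
    (hint2 : Integrable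
        (fun p => φ p * f p * log (f₁₂ (p.1, p.2.1) / (f₁ p.1 * f₂ p.2.1)))
        (ν₁.prod (ν₂.prod ν₃)))
    (hint3 : Integrable (fun p => φ p *
        (f p - f₃ p.2.2 * (f₁₃ (p.1, p.2.2) / f₃ p.2.2) * (f₂₃ p.2 / f₃ p.2.2)))
        (ν₁.prod (ν₂.prod ν₃)))
    (hcond : 0 ≤ ∫ p, φ p *
        (f p - f₃ p.2.2 * (f₁₃ (p.1, p.2.2) / f₃ p.2.2) * (f₂₃ p.2 / f₃ p.2.2))
        ∂(ν₁.prod (ν₂.prod ν₃))) :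
    (∫ p, φ p * f p * log (f₁₃ (p.1, p.2.2) / (f₁ p.1 * f₃ p.2.2))
        ∂(ν₁.prod (ν₂.prod ν₃)))
      ≤ (∫ p, φ p * f p * log (f₁₂ (p.1, p.2.1) / (f₁ p.1 * f₂ p.2.1))
        ∂(ν₁.prod (ν₂.prod ν₃))) ∧
      ((∫ p, φ p * f p * log (f₁₃ (p.1, p.2.2) / (f₁ p.1 * f₃ p.2.2))
          ∂(ν₁.prod (ν₂.prod ν₃)))
        = (∫ p, φ p * f p * log (f₁₂ (p.1, p.2.1) / (f₁ p.1 * f₂ p.2.1))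
          ∂(ν₁.prod (ν₂.prod ν₃))) ↔
        ∀ᵐ p ∂(ν₁.prod (ν₂.prod ν₃)), 0 < f p →
          φ p * (f p - f₃ p.2.2 * (f₁₃ (p.1, p.2.2) / f₃ p.2.2) * (f₂₃ p.2 / f₃ p.2.2))
            = 0) := by
  have h20 : ∀ x₂, 0 ≤ f₂ x₂ := fun x₂ => (hf₂ x₂) ▸
    integral_nonneg fun x₁ => integral_nonneg fun x₃ => hf0 _
  have h120 : ∀ x₁ x₂, 0 ≤ f₁₂ (x₁, x₂) := fun x₁ x₂ => (hf₁₂ x₁ x₂) ▸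
    integral_nonneg fun x₃ => hf0 _
  have h130 : ∀ x₁ x₃, 0 ≤ f₁₃ (x₁, x₃) := fun x₁ x₃ => (hf₁₃ x₁ x₃) ▸
    integral_nonneg fun x₂ => hf0 _
  have h230 : ∀ q, 0 ≤ f₂₃ q := fun q => (hf₂₃ q) ▸ integral_nonneg fun x₁ => hf0 _
  have h30 : ∀ x₃, 0 ≤ f₃ x₃ := fun x₃ => (hf₃ x₃) ▸
    integral_nonneg fun x₁ => integral_nonneg fun x₂ => hf0 _
  have hfInt : Integrable f (ν₁.prod (ν₂.prod ν₃)) := by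
    by_contra hc
    rw [integral_undef hc] at hfprob
    exact one_ne_zero hfprob.symm
  -- a.e. positivity of f₁ on {f > 0}
  have h1pos : ∀ᵐ p ∂(ν₁.prod (ν₂.prod ν₃)), 0 < f p → 0 < f₁ p.1 := by
    filter_upwards [marg_snd ν₁ (ν₂.prod ν₃) hfm hf0 hfInt] with p hp hfp
    rw [hf₁]
    exact hp hfp
  -- a.e. positivity of f₁₃ on {f > 0}
  have h13pos : ∀ᵐ p ∂(ν₁.prod (ν₂.prod ν₃)), 0 < f p → 0 < f₁₃ (p.1, p.2.2) := by
    let e₂ : X₂ × X₁ × X₃ ≃ᵐ X₁ × X₂ × X₃ :=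
      MeasurableEquiv.prodComm.trans (MeasurableEquiv.prodAssoc.trans
        ((MeasurableEquiv.refl X₁).prodCongr MeasurableEquiv.prodComm))
    have hmp₂ : MeasurePreserving e₂ (ν₂.prod (ν₁.prod ν₃)) (ν₁.prod (ν₂.prod ν₃)) := by
      have m1 : MeasurePreserving (Prod.swap : X₂ × X₁ × X₃ → (X₁ × X₃) × X₂)
          (ν₂.prod (ν₁.prod ν₃)) ((ν₁.prod ν₃).prod ν₂) := Measure.measurePreserving_swap
      have m2 := MeasureTheory.measurePreserving_prodAssoc ν₁ ν₃ ν₂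
      have m3 : MeasurePreserving (Prod.map (id : X₁ → X₁) (Prod.swap : X₃ × X₂ → X₂ × X₃))
          (ν₁.prod (ν₃.prod ν₂)) (ν₁.prod (ν₂.prod ν₃)) :=
        (MeasurePreserving.id ν₁).prod Measure.measurePreserving_swap
      exact (m3.comp (m2.comp m1))
    have hg : Integrable (f ∘ e₂) (ν₂.prod (ν₁.prod ν₃)) :=
      (hmp₂.integrable_comp hfm.aestronglyMeasurable).mpr hfInt
    have h := marg_fst ν₂ (ν₁.prod ν₃) (g := f ∘ e₂) (hfm.comp e₂.measurable)
      (fun x => hf0 _) hg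
    have h' := (hmp₂.symm e₂).quasiMeasurePreserving.ae h
    filter_upwards [h'] with p hp hfp
    have happ : (f ∘ e₂) (e₂.symm p) = f p := by
      simp [Function.comp]
    rw [happ] at hp
    have hconc := hp hfp
    have hsymm : (e₂.symm p).2 = (p.1, p.2.2) := rfl
    rw [hsymm] at hconc
    rw [hf₁₃]
    exact hconc
  -- a.e. positivity of f₃ on {f > 0}
  have hassoc := MeasureTheory.measurePreserving_prodAssoc ν₁ ν₂ ν₃
  have hgInt : Integrable (f ∘ MeasurableEquiv.prodAssoc) ((ν₁.prod ν₂).prod ν₃) :=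
    (hassoc.integrable_comp hfm.aestronglyMeasurable).mpr hfInt
  have h3pos : ∀ᵐ p ∂(ν₁.prod (ν₂.prod ν₃)), 0 < f p → 0 < f₃ p.2.2 := by
    have hHeq : ∀ᵐ x₃ ∂ν₃,
        (∫ pr, f (pr.1, pr.2, x₃) ∂(ν₁.prod ν₂)) = f₃ x₃ := by
      filter_upwards [hgInt.prod_left_ae] with x₃ hx₃
      rw [hf₃]
      exact integral_prod _ hx₃
    have hqmp3 : Measure.QuasiMeasurePreserving (fun p : X₁ × X₂ × X₃ => p.2.2)
        (ν₁.prod (ν₂.prod ν₃)) ν₃ :=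
      Measure.quasiMeasurePreserving_snd.comp Measure.quasiMeasurePreserving_snd
    have h3eq : ∀ᵐ p ∂(ν₁.prod (ν₂.prod ν₃)),
        (∫ pr, f (pr.1, pr.2, p.2.2) ∂(ν₁.prod ν₂)) = f₃ p.2.2 := hqmp3.ae hHeq
    have h := marg_fst (ν₁.prod ν₂) ν₃ (g := f ∘ MeasurableEquiv.prodAssoc)
      (hfm.comp MeasurableEquiv.prodAssoc.measurable) (fun x => hf0 _) hgInt
    have h' := (hassoc.symm MeasurableEquiv.prodAssoc).quasiMeasurePreserving.ae h
    filter_upwards [h', h3eq] with p hp heq hfp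
    have happ : (f ∘ MeasurableEquiv.prodAssoc)
        (MeasurableEquiv.prodAssoc.symm p) = f p := by
      simp [Function.comp]
    rw [happ] at hp
    have hconc := hp hfp
    have hsymm : (MeasurableEquiv.prodAssoc.symm
        (p : X₁ × X₂ × X₃)).2 = p.2.2 := rfl
    rw [hsymm] at hconc
    rw [← heq]
    exact hconc
  -- the pointwise key inequality / equality conditions
  have hkey : ∀ᵐ p ∂(ν₁.prod (ν₂.prod ν₃)),
      (φ p * f p * log (f₁₃ (p.1, p.2.2) / (f₁ p.1 * f₃ p.2.2))
          - φ p * f p * log (f₁₂ (p.1, p.2.1) / (f₁ p.1 * f₂ p.2.1))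
        ≤ -(φ p * (f p - f₃ p.2.2 * (f₁₃ (p.1, p.2.2) / f₃ p.2.2)
            * (f₂₃ p.2 / f₃ p.2.2)))) ∧
      (0 < f p → φ p * f p * log (f₁₃ (p.1, p.2.2) / (f₁ p.1 * f₃ p.2.2))
          - φ p * f p * log (f₁₂ (p.1, p.2.1) / (f₁ p.1 * f₂ p.2.1))
          = -(φ p * (f p - f₃ p.2.2 * (f₁₃ (p.1, p.2.2) / f₃ p.2.2)
            * (f₂₃ p.2 / f₃ p.2.2)))
        → φ p * (f p - f₃ p.2.2 * (f₁₃ (p.1, p.2.2) / f₃ p.2.2)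
            * (f₂₃ p.2 / f₃ p.2.2)) = 0) ∧
      (0 < f p → φ p * (f p - f₃ p.2.2 * (f₁₃ (p.1, p.2.2) / f₃ p.2.2)
            * (f₂₃ p.2 / f₃ p.2.2)) = 0
        → φ p * f p * log (f₁₃ (p.1, p.2.2) / (f₁ p.1 * f₃ p.2.2))
          - φ p * f p * log (f₁₂ (p.1, p.2.1) / (f₁ p.1 * f₂ p.2.1)) = 0) := by
    filter_upwards [hMarkov, h1pos, h3pos, h13pos] with p hM h1 h3 h13
    exact key_point (hφ0 p) (hf0 p) (h20 p.2.1) (h30 p.2.2) (h120 p.1 p.2.1)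
      (h130 p.1 p.2.2) (h230 p.2) hM h1 h3 h13
  have hIntSub : Integrable (fun p =>
      φ p * f p * log (f₁₃ (p.1, p.2.2) / (f₁ p.1 * f₃ p.2.2))
        - φ p * f p * log (f₁₂ (p.1, p.2.1) / (f₁ p.1 * f₂ p.2.1)))
      (ν₁.prod (ν₂.prod ν₃)) := hint1.sub hint2
  have hIntnegT : Integrable (fun p =>
      -(φ p * (f p - f₃ p.2.2 * (f₁₃ (p.1, p.2.2) / f₃ p.2.2) * (f₂₃ p.2 / f₃ p.2.2))))
      (ν₁.prod (ν₂.prod ν₃)) := hint3.neg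
  have hmono : (∫ p, (φ p * f p * log (f₁₃ (p.1, p.2.2) / (f₁ p.1 * f₃ p.2.2))
        - φ p * f p * log (f₁₂ (p.1, p.2.1) / (f₁ p.1 * f₂ p.2.1)))
        ∂(ν₁.prod (ν₂.prod ν₃)))
      ≤ ∫ p, -(φ p * (f p - f₃ p.2.2 * (f₁₃ (p.1, p.2.2) / f₃ p.2.2)
        * (f₂₃ p.2 / f₃ p.2.2))) ∂(ν₁.prod (ν₂.prod ν₃)) :=
    integral_mono_ae hIntSub hIntnegT (hkey.mono fun p hp => hp.1)
  have hsub : (∫ p, (φ p * f p * log (f₁₃ (p.1, p.2.2) / (f₁ p.1 * f₃ p.2.2))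
        - φ p * f p * log (f₁₂ (p.1, p.2.1) / (f₁ p.1 * f₂ p.2.1)))
        ∂(ν₁.prod (ν₂.prod ν₃)))
      = (∫ p, φ p * f p * log (f₁₃ (p.1, p.2.2) / (f₁ p.1 * f₃ p.2.2))
          ∂(ν₁.prod (ν₂.prod ν₃)))
        - ∫ p, φ p * f p * log (f₁₂ (p.1, p.2.1) / (f₁ p.1 * f₂ p.2.1))
          ∂(ν₁.prod (ν₂.prod ν₃)) := integral_sub hint1 hint2
  have hnegint : (∫ p, -(φ p * (f p - f₃ p.2.2 * (f₁₃ (p.1, p.2.2) / f₃ p.2.2)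
        * (f₂₃ p.2 / f₃ p.2.2))) ∂(ν₁.prod (ν₂.prod ν₃)))
      = -∫ p, φ p * (f p - f₃ p.2.2 * (f₁₃ (p.1, p.2.2) / f₃ p.2.2)
        * (f₂₃ p.2 / f₃ p.2.2)) ∂(ν₁.prod (ν₂.prod ν₃)) := integral_neg _
  have hmain : (∫ p, φ p * f p * log (f₁₃ (p.1, p.2.2) / (f₁ p.1 * f₃ p.2.2))
        ∂(ν₁.prod (ν₂.prod ν₃)))
      ≤ ∫ p, φ p * f p * log (f₁₂ (p.1, p.2.1) / (f₁ p.1 * f₂ p.2.1))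
        ∂(ν₁.prod (ν₂.prod ν₃)) := by
    rw [hsub, hnegint] at hmono
    linarith [hcond]
  refine ⟨hmain, ?_, ?_⟩
  · intro heq
    have hle : (∫ p, (φ p * f p * log (f₁₃ (p.1, p.2.2) / (f₁ p.1 * f₃ p.2.2))
          - φ p * f p * log (f₁₂ (p.1, p.2.1) / (f₁ p.1 * f₂ p.2.1)))
          ∂(ν₁.prod (ν₂.prod ν₃))) = 0 := by
      rw [hsub, heq]; ring
    have hTzero : (∫ p, φ p * (f p - f₃ p.2.2 * (f₁₃ (p.1, p.2.2) / f₃ p.2.2)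
          * (f₂₃ p.2 / f₃ p.2.2)) ∂(ν₁.prod (ν₂.prod ν₃))) = 0 := by
      rw [hle, hnegint] at hmono
      linarith [hcond]
    have hdiffint : Integrable (fun p =>
        -(φ p * (f p - f₃ p.2.2 * (f₁₃ (p.1, p.2.2) / f₃ p.2.2) * (f₂₃ p.2 / f₃ p.2.2)))
          - (φ p * f p * log (f₁₃ (p.1, p.2.2) / (f₁ p.1 * f₃ p.2.2))
            - φ p * f p * log (f₁₂ (p.1, p.2.1) / (f₁ p.1 * f₂ p.2.1))))
        (ν₁.prod (ν₂.prod ν₃)) := hIntnegT.sub hIntSub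
    have hdiffnn : 0 ≤ᵐ[ν₁.prod (ν₂.prod ν₃)] fun p =>
        -(φ p * (f p - f₃ p.2.2 * (f₁₃ (p.1, p.2.2) / f₃ p.2.2) * (f₂₃ p.2 / f₃ p.2.2)))
          - (φ p * f p * log (f₁₃ (p.1, p.2.2) / (f₁ p.1 * f₃ p.2.2))
            - φ p * f p * log (f₁₂ (p.1, p.2.1) / (f₁ p.1 * f₂ p.2.1))) := by
      filter_upwards [hkey] with p hp
      simp only [Pi.zero_apply]
      linarith [hp.1]
    have hdint : (∫ p,
        (-(φ p * (f p - f₃ p.2.2 * (f₁₃ (p.1, p.2.2) / f₃ p.2.2) * (f₂₃ p.2 / f₃ p.2.2)))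
          - (φ p * f p * log (f₁₃ (p.1, p.2.2) / (f₁ p.1 * f₃ p.2.2))
            - φ p * f p * log (f₁₂ (p.1, p.2.1) / (f₁ p.1 * f₂ p.2.1))))
        ∂(ν₁.prod (ν₂.prod ν₃))) = 0 := by
      rw [integral_sub hIntnegT hIntSub, hnegint, hTzero, hle]
      ring
    have hae0 := (integral_eq_zero_iff_of_nonneg_ae hdiffnn hdiffint).mp hdint
    filter_upwards [hae0, hkey] with p h0' hk hfp
    have h0'' : -(φ p * (f p - f₃ p.2.2 * (f₁₃ (p.1, p.2.2) / f₃ p.2.2)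
        * (f₂₃ p.2 / f₃ p.2.2)))
          - (φ p * f p * log (f₁₃ (p.1, p.2.2) / (f₁ p.1 * f₃ p.2.2))
            - φ p * f p * log (f₁₂ (p.1, p.2.1) / (f₁ p.1 * f₂ p.2.1))) = 0 := h0'
    exact hk.2.1 hfp (by linarith)
  · intro hCI
    have hzero : (fun p => φ p * f p * log (f₁₃ (p.1, p.2.2) / (f₁ p.1 * f₃ p.2.2))
        - φ p * f p * log (f₁₂ (p.1, p.2.1) / (f₁ p.1 * f₂ p.2.1)))
        =ᵐ[ν₁.prod (ν₂.prod ν₃)] 0 := by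
      filter_upwards [hCI, hkey] with p hci hk
      by_cases hfp : 0 < f p
      · exact hk.2.2 hfp (hci hfp)
      · have hfz : f p = 0 := le_antisymm (not_lt.mp hfp) (hf0 p)
        simp [hfz]
    have hz : (∫ p, (φ p * f p * log (f₁₃ (p.1, p.2.2) / (f₁ p.1 * f₃ p.2.2))
        - φ p * f p * log (f₁₂ (p.1, p.2.1) / (f₁ p.1 * f₂ p.2.1)))
        ∂(ν₁.prod (ν₂.prod ν₃))) = 0 := by
      rw [integral_congr_ae hzero]
      simp
    rw [hsub] at hz
    linarith
end

section
/- Gaussian maximizes the weighted entropy: Let C be a positive definite d×d real matrix and let f^No_C(x) = (2π)^{−d/2}·(det C)^{−1/2}·exp(−⟨x, C⁻¹x⟩/2) be the centered normal density on ℝ^d (with respect to Lebesgue measure). Let f be a probability density on ℝ^d, φ : ℝ^d → [0,∞) a measurable weight function, and define the d×d matrices Φ = ∫_{ℝ^d} φ(x)·f(x)·x xᵀ dx and Φ^No = ∫_{ℝ^d} φ(x)·f^No_C(x)·x xᵀ dx, assuming all integrals below converge absolutely. If (i) ∫_{ℝ^d} φ(x)·(f(x) − f^No_C(x)) dx ≥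 0 and (ii) log((2π)^d·det C)·∫_{ℝ^d} φ(x)·(f(x) − f^No_C(x)) dx + tr( C⁻¹·(Φ − Φ^No) ) ≤ 0, then h^w_φ(f) ≤ h^w_φ(f^No_C) = (1/2)·log((2π)^d·det C)·∫_{ℝ^d} φ(x)·f^No_C(x) dx + (1/2)·tr( C⁻¹·Φ^No ), with equality iff f = f^No_C modulo φ. -/
open MeasureTheory Real Matrix

lemma gibbs_ineq {f g : ℝ} (hf : 0 ≤ f) (hg : 0 < g) :
    f - g ≤ f * (Real.log f - Real.log g) := by
  rcases hf.lt_or_eq with h | h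
  · have h1 := Real.log_le_sub_one_of_pos (div_pos hg h)
    rw [Real.log_div hg.ne' h.ne'] at h1
    have h2 := mul_le_mul_of_nonneg_left h1 h.le
    have h3 : f * (g / f - 1) = g - f := by field_simp
    nlinarith
  · simp [← h]; linarith

lemma gibbs_eq {f g : ℝ} (hf : 0 < f) (hg : 0 < g)
    (h : f * (Real.log f - Real.log g) = f - g) : f = g := by
  by_contra hne
  have h1 : g / f ≠ 1 := fun h1 => hne (((div_eq_one_iff_eq hf.ne').mp h1).symm)
  have h2 := Real.log_lt_sub_one_of_pos (div_pos hg hf) h1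
  rw [Real.log_div hg.ne' hf.ne'] at h2
  have h3 := mul_lt_mul_of_pos_left h2 hf
  have h4 : f * (g / f - 1) = g - f := by field_simp
  nlinarith

lemma quad_integral {d : ℕ} (B : Matrix (Fin d) (Fin d) ℝ) (w : (Fin d → ℝ) → ℝ)
    (hw : ∀ i j, Integrable (fun x : Fin d → ℝ => w x * (x i * x j))) :
    Integrable (fun x : Fin d → ℝ => w x * (x ⬝ᵥ B.mulVec x)) ∧
    ∫ x : Fin d → ℝ, w x * (x ⬝ᵥ B.mulVec x)
      = ∑ i, ∑ j, B i j * ∫ x : Fin d → ℝ, w x * (x i * x j) := by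
  have hfun : (fun x : Fin d → ℝ => w x * (x ⬝ᵥ B.mulVec x))
      = fun x => ∑ i, ∑ j, B i j * (w x * (x i * x j)) := by
    funext x
    simp only [dotProduct, Matrix.mulVec, Finset.mul_sum]
    refine Finset.sum_congr rfl fun i _ => ?_
    exact Finset.sum_congr rfl fun j _ => by ring
  have hint : ∀ i (_ : i ∈ Finset.univ), Integrable
      (fun x : Fin d → ℝ => ∑ j, B i j * (w x * (x i * x j))) :=
    fun i _ => integrable_finset_sum _ fun j _ => (hw i j).const_mul _
  constructor
  · rw [hfun]; exact integrable_finset_sum _ hint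
  · rw [hfun, integral_finset_sum _ hint]
    refine Finset.sum_congr rfl fun i _ => ?_
    rw [integral_finset_sum _ fun j _ => (hw i j).const_mul _]
    exact Finset.sum_congr rfl fun j _ => integral_const_mul _ _

lemma entropy_arith_le {L Ef Eg D F G TF TNo : ℝ}
    (h1 : D = Ef - (-(L / 2) * F - 1 / 2 * TF))
    (h2 : Eg = -(L / 2) * G - 1 / 2 * TNo)
    (h3 : F - G ≤ D)
    (h4 : 0 ≤ F - G)
    (h5 : L * (F - G) + (TF - TNo) ≤ 0) :
    -Ef ≤ -Eg := by nlinarith [h1, h2, h3, h4, h5]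

lemma entropy_arith_eq {L Ef Eg D F G TF TNo : ℝ}
    (h1 : D = Ef - (-(L / 2) * F - 1 / 2 * TF))
    (h2 : Eg = -(L / 2) * G - 1 / 2 * TNo)
    (h3 : F - G ≤ D)
    (h4 : 0 ≤ F - G)
    (h5 : L * (F - G) + (TF - TNo) ≤ 0)
    (h6 : -Ef = -Eg) :
    D = F - G := by nlinarith [h1, h2, h3, h4, h5, h6]

/-- **Gaussian maximizes the weighted entropy.** Let `C` be positive definite,
`gNo` the centered normal density with covariance `C` on `ℝ^d`, and `f` a
probability density. Under the conditions `∫ φ (f - gNo) ≥ 0` and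
`log((2π)^d det C) · ∫ φ (f - gNo) + tr(C⁻¹ (Φ - ΦNo)) ≤ 0`, one has
`h^w_φ(f) ≤ h^w_φ(gNo) = ½ log((2π)^d det C) ∫ φ gNo + ½ tr(C⁻¹ ΦNo)`, with
equality iff `f = gNo` modulo `φ`. -/
theorem gaussian_maximizes_weighted_entropy
    {d : ℕ} (C : Matrix (Fin d) (Fin d) ℝ) (hC : C.PosDef)
    (φ f : (Fin d → ℝ) → ℝ)
    (hφm : Measurable φ) (hfm : Measurable f)
    (hφ0 : ∀ x, 0 ≤ φ x) (hf0 : ∀ x, 0 ≤ f x)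
    (hprob : ∫ x, f x = 1)
    (gNo : (Fin d → ℝ) → ℝ)
    (hgNo : ∀ x, gNo x =
        (Real.sqrt ((2 * π) ^ d * C.det))⁻¹ * exp (-(x ⬝ᵥ C⁻¹.mulVec x) / 2))
    (Φ ΦNo : Matrix (Fin d) (Fin d) ℝ)
    (hΦ : ∀ i j, Φ i j = ∫ x, φ x * f x * (x i * x j))
    (hΦNo : ∀ i j, ΦNo i j = ∫ x, φ x * gNo x * (x i * x j))
    (hint1 : Integrable (fun x => φ x * f x * log (f x)))
    (hint2 : Integrable (fun x => φ x * gNo x * log (gNo x)))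
    (hint3 : Integrable (fun x => φ x * (f x - gNo x)))
    (hint4 : Integrable (fun x => φ x * gNo x))
    (hint5 : ∀ i j, Integrable (fun x => φ x * f x * (x i * x j)))
    (hint6 : ∀ i j, Integrable (fun x => φ x * gNo x * (x i * x j)))
    (hi : 0 ≤ ∫ x, φ x * (f x - gNo x))
    (hii : log ((2 * π) ^ d * C.det) * (∫ x, φ x * (f x - gNo x))
        + Matrix.trace (C⁻¹ * (Φ - ΦNo)) ≤ 0) :
    ((-∫ x, φ x * f x * log (f x)) ≤ -∫ x, φ x * gNo x * log (gNo x) ∧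
      (-∫ x, φ x * gNo x * log (gNo x))
        = (1 / 2) * log ((2 * π) ^ d * C.det) * (∫ x, φ x * gNo x)
          + (1 / 2) * Matrix.trace (C⁻¹ * ΦNo)) ∧
      ((-∫ x, φ x * f x * log (f x)) = -∫ x, φ x * gNo x * log (gNo x) ↔
        ∀ᵐ x, 0 < f x → φ x * (f x - gNo x) = 0) := by
  set L : ℝ := log ((2 * π) ^ d * C.det) with hL
  have hA : (0:ℝ) < (2 * π) ^ d * C.det := by
    have := hC.det_pos
    have hπ : (0:ℝ) < 2 * π := by positivity
    positivity
  have hgpos : ∀ x, 0 < gNo x := by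
    intro x
    rw [hgNo x]
    have : (0:ℝ) < Real.sqrt ((2 * π) ^ d * C.det) := Real.sqrt_pos.mpr hA
    positivity
  have hlogg : ∀ x, log (gNo x) = -(L / 2) - (x ⬝ᵥ C⁻¹.mulVec x) / 2 := by
    intro x
    rw [hgNo x, Real.log_mul (by positivity) (Real.exp_pos _).ne', Real.log_inv,
      Real.log_exp, Real.log_sqrt hA.le, hL]
    ring
  -- integrability of φ f
  have hφf : Integrable (fun x => φ x * f x) :=
    (hint3.add hint4).congr (Filter.Eventually.of_forall fun x => by
      simp only [Pi.add_apply]; ring)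
  -- quadratic integrals
  obtain ⟨hqf_int, hqf_val⟩ := quad_integral C⁻¹ (fun x => φ x * f x) hint5
  obtain ⟨hqg_int, hqg_val⟩ := quad_integral C⁻¹ (fun x => φ x * gNo x) hint6
  -- trace identities
  have htrΦ : Matrix.trace (C⁻¹ * Φ) = ∑ i, ∑ j, C⁻¹ i j * ∫ x, φ x * f x * (x i * x j) := by
    simp only [Matrix.trace, Matrix.diag_apply, Matrix.mul_apply]
    refine Finset.sum_congr rfl fun i _ => Finset.sum_congr rfl fun j _ => ?_
    rw [hΦ j i]
    congr 1
    exact integral_congr_ae (Filter.Eventually.of_forall fun x => by ring)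
  have htrΦNo : Matrix.trace (C⁻¹ * ΦNo) = ∑ i, ∑ j, C⁻¹ i j * ∫ x, φ x * gNo x * (x i * x j) := by
    simp only [Matrix.trace, Matrix.diag_apply, Matrix.mul_apply]
    refine Finset.sum_congr rfl fun i _ => Finset.sum_congr rfl fun j _ => ?_
    rw [hΦNo j i]
    congr 1
    exact integral_congr_ae (Filter.Eventually.of_forall fun x => by ring)
  -- key integral formulas
  have hef : (fun x => φ x * f x * log (gNo x))
      = fun x => -(L/2) * (φ x * f x) - (1/2) * (φ x * f x * (x ⬝ᵥ C⁻¹.mulVec x)) := by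
    funext x; rw [hlogg x]; ring
  have hfg_int : Integrable (fun x => φ x * f x * log (gNo x)) := by
    rw [hef]; exact (hφf.const_mul _).sub (hqf_int.const_mul _)
  have key_f : ∫ x, φ x * f x * log (gNo x)
      = -(L / 2) * (∫ x, φ x * f x) - 1 / 2 * Matrix.trace (C⁻¹ * Φ) := by
    rw [hef, integral_sub (hφf.const_mul _) (hqf_int.const_mul _),
      integral_const_mul, integral_const_mul, hqf_val, htrΦ]
  have heg : (fun x => φ x * gNo x * log (gNo x))
      = fun x => -(L/2) * (φ x * gNo x) - (1/2) * (φ x * gNo x * (x ⬝ᵥ C⁻¹.mulVec x)) := by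
    funext x; rw [hlogg x]; ring
  have key_g : (∫ x, φ x * gNo x * log (gNo x))
      = -(L / 2) * (∫ x, φ x * gNo x) - 1 / 2 * Matrix.trace (C⁻¹ * ΦNo) := by
    rw [heg, integral_sub (hint4.const_mul _) (hqg_int.const_mul _),
      integral_const_mul, integral_const_mul, hqg_val, htrΦNo]
  -- relative-entropy term
  have hDfun : (fun x => φ x * f x * (log (f x) - log (gNo x)))
      = fun x => φ x * f x * log (f x) - φ x * f x * log (gNo x) := by
    funext x; ring
  have hD_int : Integrable (fun x => φ x * f x * (log (f x) - log (gNo x))) := by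
    rw [hDfun]; exact hint1.sub hfg_int
  have hD_val : (∫ x, φ x * f x * (log (f x) - log (gNo x)))
      = (∫ x, φ x * f x * log (f x)) - ∫ x, φ x * f x * log (gNo x) := by
    rw [hDfun, integral_sub hint1 hfg_int]
  rw [key_f] at hD_val
  have hpt : ∀ x, φ x * (f x - gNo x) ≤ φ x * f x * (log (f x) - log (gNo x)) := by
    intro x
    have h := gibbs_ineq (hf0 x) (hgpos x)
    have h2 := mul_le_mul_of_nonneg_left h (hφ0 x)
    nlinarith [h2]
  have hD_ge : (∫ x, φ x * (f x - gNo x)) ≤ ∫ x, φ x * f x * (log (f x) - log (gNo x)) :=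
    integral_mono hint3 hD_int hpt
  have hI_split : (∫ x, φ x * (f x - gNo x)) = (∫ x, φ x * f x) - ∫ x, φ x * gNo x := by
    have he : (fun x => φ x * (f x - gNo x)) = fun x => φ x * f x - φ x * gNo x := by
      funext x; ring
    rw [he, integral_sub hφf hint4]
  have htr_sub : Matrix.trace (C⁻¹ * (Φ - ΦNo))
      = Matrix.trace (C⁻¹ * Φ) - Matrix.trace (C⁻¹ * ΦNo) := by
    rw [Matrix.mul_sub, Matrix.trace_sub]
  rw [hI_split, htr_sub] at hii
  rw [hI_split] at hi hD_ge
  have hD_val' : (∫ x, φ x * f x * (log (f x) - log (gNo x)))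
      = (∫ x, φ x * f x * log (f x))
        - (-(L / 2) * (∫ x, φ x * f x) - 1 / 2 * Matrix.trace (C⁻¹ * Φ)) := hD_val
  refine ⟨⟨entropy_arith_le hD_val' key_g hD_ge hi hii, by rw [key_g]; ring⟩, ?_⟩
  constructor
  · intro heq
    have hD0 := entropy_arith_eq hD_val' key_g hD_ge hi hii heq
    have hsub0 : ∫ x, (φ x * f x * (log (f x) - log (gNo x)) - φ x * (f x - gNo x)) = 0 := by
      rw [integral_sub hD_int hint3, hI_split]
      linarith [hD0]
    have hae0 := (integral_eq_zero_iff_of_nonneg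
      (fun x => by simpa using hpt x) (hD_int.sub hint3)).mp hsub0
    filter_upwards [hae0] with x hx hfx
    simp only [Pi.sub_apply, Pi.zero_apply, sub_eq_zero] at hx
    rcases (hφ0 x).lt_or_eq with hφx | hφx
    · have hx' : φ x * (f x * (log (f x) - log (gNo x))) = φ x * (f x - gNo x) := by
        rw [← mul_assoc]; exact hx
      have hcancel := mul_left_cancel₀ hφx.ne' hx'
      rw [gibbs_eq hfx (hgpos x) hcancel]
      ring
    · rw [← hφx]; ring
  · intro hae
    have hle : ∀ᵐ x, φ x * (f x - gNo x) ≤ 0 := by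
      filter_upwards [hae] with x hx
      rcases (hf0 x).lt_or_eq with hfx | hfx
      · exact le_of_eq (hx hfx)
      · have h1 := hgpos x
        have h2 := hφ0 x
        nlinarith [h1, h2]
    have hI0 : (∫ x, φ x * f x) - (∫ x, φ x * gNo x) = 0 := by
      have h1 := integral_nonpos_of_ae hle
      rw [hI_split] at h1
      linarith
    have hzero : ∀ᵐ x, φ x * (f x - gNo x) = 0 := by
      have h1 : ∫ x, -(φ x * (f x - gNo x)) = 0 := by
        rw [integral_neg, hI_split, hI0, neg_zero]
      have h2 := (integral_eq_zero_iff_of_nonneg_ae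
        (hle.mono fun x hx => by simpa using neg_nonneg.mpr hx) hint3.neg).mp h1
      filter_upwards [h2] with x hx
      simp only [Pi.neg_apply, Pi.zero_apply] at hx
      linarith [hx]
    have heqfun : (fun x => φ x * f x * log (f x)) =ᵐ[volume]
        (fun x => φ x * gNo x * log (gNo x)) := by
      filter_upwards [hzero] with x hx
      rcases (hφ0 x).lt_or_eq with hφx | hφx
      · have hfg : f x = gNo x := by
          rcases mul_eq_zero.mp hx with h | h
          · exact absurd h hφx.ne'
          · linarith [h]
        rw [hfg]
      · rw [← hφx]; ring
    rw [integral_congr_ae heqfun]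
end
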